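/- arXiv:2604.07534 — 3 statements merged into one kernel-verified Lean document; each statement's English description precedes it below -/
import Mathlib

section
/- Let m ≥ 2, let X be a σ quasi-uniform grid with σ < 3/2, and let f: ℝ → ℝ be continuous on ℝ, C² on ℝ∖{μ} with M₂ := sup_{ℝ∖{μ}} |f''| < ∞ and jump [f'] := f'(μ⁺) − f'(μ⁻) > 0. Let a ≤ μ ≤ b be grid points with b − a ≤ 2h (h := h_max) and min(μ − a, b − μ) > (3−2σ)h/(4σ²), let p⁻ be the Lagrange polynomial of degree ≤ m−1 interpolating f at the m consecutive grid nodes ending at a, and p⁺ the one interpolating f at the m consecutive grid nodes starting at b. Then there exists a constant 0 < k < 1, depending only on m and σ, such that if h < k·h_c with h_c := |[f']|/(4M₂), then p⁺(a) − p⁻(a) < 0 and p⁺(b) − p⁻(b) > 0, and hence p⁺ − p⁻ has a zero in [a,b]. -/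
lemma grid_le_nat (X : ℤ → ℝ) (hmax : ℝ) (hhi : ∀ i : ℤ, X i - X (i - 1) ≤ hmax) :
    ∀ n : ℕ, ∀ p : ℤ, X (p + n) - X p ≤ (n : ℝ) * hmax := by
  intro n
  induction n with
  | zero => simp
  | succ n ih =>
    intro p
    have h2 := hhi (p + n + 1)
    have e : (p + n + 1) - 1 = p + n := by ring
    rw [e] at h2
    have := ih p
    have e2 : (p + (n + 1 : ℕ) : ℤ) = p + n + 1 := by push_cast; ring
    rw [e2]
    push_cast
    linarith

lemma grid_ge_nat (X : ℤ → ℝ) (hmin : ℝ) (hlo : ∀ i : ℤ, hmin ≤ X i - X (i - 1)) :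
    ∀ n : ℕ, ∀ p : ℤ, (n : ℝ) * hmin ≤ X (p + n) - X p := by
  intro n
  induction n with
  | zero => simp
  | succ n ih =>
    intro p
    have h2 := hlo (p + n + 1)
    have e : (p + n + 1) - 1 = p + n := by ring
    rw [e] at h2
    have := ih p
    have e2 : (p + (n + 1 : ℕ) : ℤ) = p + n + 1 := by push_cast; ring
    rw [e2]
    push_cast
    linarith

lemma grid_le (X : ℤ → ℝ) (hmax : ℝ) (hhi : ∀ i : ℤ, X i - X (i - 1) ≤ hmax) :
    ∀ p q : ℤ, p ≤ q → X q - X p ≤ (q - p : ℝ) * hmax := by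
  intro p q hpq
  have h := grid_le_nat X hmax hhi (q - p).toNat p
  have e : p + ((q - p).toNat : ℤ) = q := by
    rw [Int.toNat_of_nonneg (by omega)]; ring
  rw [e] at h
  have e2 : ((q - p).toNat : ℝ) = (q : ℝ) - p := by
    rw [← Int.cast_natCast, Int.toNat_of_nonneg (by omega)]; push_cast; ring
  rwa [e2] at h

lemma grid_ge (X : ℤ → ℝ) (hmin : ℝ) (hlo : ∀ i : ℤ, hmin ≤ X i - X (i - 1)) :
    ∀ p q : ℤ, p ≤ q → ((q : ℝ) - p) * hmin ≤ X q - X p := by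
  intro p q hpq
  have h := grid_ge_nat X hmin hlo (q - p).toNat p
  have e : p + ((q - p).toNat : ℤ) = q := by
    rw [Int.toNat_of_nonneg (by omega)]; ring
  rw [e] at h
  have e2 : ((q - p).toNat : ℝ) = (q : ℝ) - p := by
    rw [← Int.cast_natCast, Int.toNat_of_nonneg (by omega)]; push_cast; ring
  rwa [e2] at h

open Set Filter

lemma left_taylor (f f' f'' : ℝ → ℝ) (μ M dL : ℝ) (hM0 : 0 ≤ M)
    (hf : Continuous f)
    (h1 : ∀ x ≠ μ, HasDerivAt f (f' x) x)
    (h2 : ∀ x ≠ μ, HasDerivAt f' (f'' x) x)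
    (hM : ∀ x ≠ μ, |f'' x| ≤ M)
    (hdL : HasDerivWithinAt f dL (Set.Iic μ) μ) :
    ∀ x ≤ μ, |f x - f μ - dL * (x - μ)| ≤ 3 * M * (x - μ) ^ 2 := by
  -- Step 1: f' is M-Lipschitz on Iio μ
  have step1 : ∀ x ∈ Iio μ, ∀ y ∈ Iio μ, |f' y - f' x| ≤ M * |y - x| := by
    intro x hx y hy
    have := (convex_Iio μ).norm_image_sub_le_of_norm_hasDerivWithin_le
      (f := f') (f' := f'') (fun z hz => (h2 z (ne_of_lt hz)).hasDerivWithinAt)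
      (fun z hz => by rw [Real.norm_eq_abs]; exact hM z (ne_of_lt hz)) hx hy
    simpa [Real.norm_eq_abs] using this
  -- Step 2: second-order bound with base point x < μ
  have step2 : ∀ x < μ, |f μ - f x - f' x * (μ - x)| ≤ M * (μ - x) ^ 2 := by
    intro x hx
    have key : ∀ z ∈ Ico x μ, |f z - f x - f' x * (z - x)| ≤ M * (μ - x) ^ 2 := by
      intro z hz
      have hconv : Convex ℝ (Ico x μ) := convex_Ico x μ
      have hd : ∀ t ∈ Ico x μ, HasDerivWithinAt (fun u => f u - f' x * u)
          (f' t - f' x) (Ico x μ) t := by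
        intro t ht
        have := ((h1 t (ne_of_lt ht.2)).sub ((hasDerivAt_id' t).const_mul (f' x))).hasDerivWithinAt (s := Ico x μ)
        simp only [mul_one] at this
        exact this
      have hb : ∀ t ∈ Ico x μ, ‖f' t - f' x‖ ≤ M * (μ - x) := by
        intro t ht
        rw [Real.norm_eq_abs]
        calc |f' t - f' x| ≤ M * |t - x| := step1 x hx t (lt_of_lt_of_le ht.2 le_rfl)
          _ ≤ M * (μ - x) := by
            apply mul_le_mul_of_nonneg_left _ hM0
            rw [abs_of_nonneg (by linarith [ht.1])]; linarith [ht.2]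
      have := hconv.norm_image_sub_le_of_norm_hasDerivWithin_le hd hb
        (Set.left_mem_Ico.mpr hx) hz
      rw [Real.norm_eq_abs, Real.norm_eq_abs] at this
      calc |f z - f x - f' x * (z - x)| = |(f z - f' x * z) - (f x - f' x * x)| := by ring_nf
        _ ≤ M * (μ - x) * |z - x| := this
        _ ≤ M * (μ - x) ^ 2 := by
            have : |z - x| ≤ μ - x := by
              rw [abs_of_nonneg (by linarith [hz.1])]; linarith [hz.2]
            nlinarith [mul_nonneg hM0 (le_of_lt (sub_pos.mpr hx))]
    -- take the limit z → μ⁻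
    have hten : Tendsto (fun z => |f z - f x - f' x * (z - x)|) (nhdsWithin μ (Iio μ))
        (nhds |f μ - f x - f' x * (μ - x)|) := by
      apply Tendsto.mono_left _ nhdsWithin_le_nhds
      exact ((hf.tendsto μ).sub tendsto_const_nhds |>.sub
        ((tendsto_const_nhds.mul ((tendsto_id).sub tendsto_const_nhds)))).abs
    refine le_of_tendsto hten ?_
    filter_upwards [Ico_mem_nhdsLT_of_mem (Set.mem_Ioc.mpr ⟨hx, le_rfl⟩)] with z hz
    exact key z hz
  -- Step 3: |dL - f' x| ≤ M * (μ - x)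
  have step3 : ∀ x < μ, |dL - f' x| ≤ 2 * M * (μ - x) := by
    intro x hx
    have hslope := hasDerivWithinAt_iff_tendsto_slope.mp hdL
    have hset : Iic μ \ {μ} = Iio μ := by
      ext t; simp [lt_iff_le_and_ne]
    rw [hset] at hslope
    have hten : Tendsto (fun y => |slope f μ y - f' x|) (nhdsWithin μ (Iio μ))
        (nhds |dL - f' x|) := (hslope.sub tendsto_const_nhds).abs
    refine le_of_tendsto hten ?_
    filter_upwards [Ioo_mem_nhdsLT_of_mem (Set.mem_Ioc.mpr ⟨hx, le_rfl⟩)] with y hy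
    have hyx : x < y := hy.1
    have hyμ : y < μ := hy.2
    have h2y := step2 y hyμ
    have h1y := step1 x hx y hyμ
    have habs : |y - x| = y - x := abs_of_nonneg (by linarith)
    rw [habs] at h1y
    have hsl : slope f μ y = (f y - f μ) / (y - μ) := by
      rw [slope_def_field]
    rw [hsl]
    have hne : y - μ ≠ 0 := by intro h; linarith [sub_eq_zero.mp h]
    have hne2 : μ - y ≠ 0 := by intro h; linarith [sub_eq_zero.mp h]
    have : (f y - f μ) / (y - μ) - f' x = (f μ - f y - f' x * (μ - y)) / (μ - y) := by
      field_simp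
      ring
    rw [this, abs_div, abs_of_pos (by linarith : (0:ℝ) < μ - y), div_le_iff₀ (by linarith)]
    have tri : |f μ - f y - f' x * (μ - y)| ≤ |f μ - f y - f' y * (μ - y)| + |f' y - f' x| * (μ - y) := by
      have : f μ - f y - f' x * (μ - y) = (f μ - f y - f' y * (μ - y)) + (f' y - f' x) * (μ - y) := by ring
      rw [this]
      refine (abs_add_le _ _).trans ?_
      rw [abs_mul, abs_of_pos (by linarith : (0:ℝ) < μ - y)]
    nlinarith [sq_nonneg (μ - y), mul_nonneg hM0 (by linarith : (0:ℝ) ≤ μ - y),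
      mul_nonneg (mul_nonneg hM0 (by linarith : (0:ℝ) ≤ μ - y)) (by linarith : (0:ℝ) ≤ y - x)]
  -- combine
  intro x hx
  rcases eq_or_lt_of_le hx with rfl | hlt
  · simp [hM0]
  · have h3 := step2 x hlt
    have h4 := step3 x hlt
    have : |f x - f μ - dL * (x - μ)| ≤ |f μ - f x - f' x * (μ - x)| + |dL - f' x| * (μ - x) := by
      have e : f x - f μ - dL * (x - μ) = -((f μ - f x - f' x * (μ - x)) - (dL - f' x) * (μ - x)) := by ring
      rw [e, abs_neg, sub_eq_add_neg]
      refine (abs_add_le _ _).trans ?_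
      rw [abs_neg, abs_mul, abs_of_pos (by linarith : (0:ℝ) < μ - x)]
    nlinarith [sq_nonneg (μ - x), mul_nonneg hM0 (by linarith : (0:ℝ) ≤ μ - x)]
lemma right_taylor (f f' f'' : ℝ → ℝ) (μ M dR : ℝ) (hM0 : 0 ≤ M)
    (hf : Continuous f)
    (h1 : ∀ x ≠ μ, HasDerivAt f (f' x) x)
    (h2 : ∀ x ≠ μ, HasDerivAt f' (f'' x) x)
    (hM : ∀ x ≠ μ, |f'' x| ≤ M)
    (hdR : HasDerivWithinAt f dR (Set.Ici μ) μ) :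
    ∀ x, μ ≤ x → |f x - f μ - dR * (x - μ)| ≤ 3 * M * (x - μ) ^ 2 := by
  set u : ℝ → ℝ := fun t => 2 * μ - t with hu
  have hu_deriv : ∀ t : ℝ, HasDerivAt u (-1) t := by
    intro t
    have := (hasDerivAt_const t (2*μ)).sub (hasDerivAt_id' t)
    rw [zero_sub] at this
    exact this
  have key := left_taylor (fun t => f (u t)) (fun t => -f' (u t)) (fun t => f'' (u t))
    μ M (-dR) hM0
    (hf.comp (by continuity))
    (by
      intro t ht
      have hne : u t ≠ μ := by simp [hu]; intro h; apply ht; linarith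
      have := (h1 (u t) hne).comp t (hu_deriv t)
      simpa [Function.comp_def] using this)
    (by
      intro t ht
      have hne : u t ≠ μ := by simp [hu]; intro h; apply ht; linarith
      have := ((h2 (u t) hne).comp t (hu_deriv t)).neg
      simp [Function.comp_def] at this
      exact this)
    (by
      intro t ht
      have hne : u t ≠ μ := by simp [hu]; intro h; apply ht; linarith
      exact hM (u t) hne)
    (by
      have hmaps : MapsTo u (Set.Iic μ) (Set.Ici μ) := by
        intro t ht; simp only [hu, Set.mem_Ici]; simp only [Set.mem_Iic] at ht; linarith
      have huμ : u μ = μ := by simp [hu]; ring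
      have hud : HasDerivWithinAt u (-1) (Set.Iic μ) μ := (hu_deriv μ).hasDerivWithinAt
      have hdR' : HasDerivWithinAt f dR (Set.Ici μ) (u μ) := by rw [huμ]; exact hdR
      have := HasDerivWithinAt.comp μ hdR' hud hmaps
      simpa [Function.comp_def] using this)
  intro x hx
  have := key (2 * μ - x) (by linarith)
  simp only [hu] at this
  have e : 2 * μ - (2 * μ - x) = x := by ring
  have e2 : 2 * μ - μ = μ := by ring
  rw [e, e2] at this
  calc |f x - f μ - dR * (x - μ)| = |f x - f μ - -dR * (2 * μ - x - μ)| := by ring_nf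
    _ ≤ 3 * M * (2 * μ - x - μ) ^ 2 := this
    _ = 3 * M * (x - μ) ^ 2 := by ring
open Polynomial Finset

lemma interp_bound (m : ℕ) (hm : 1 ≤ m) (v : Fin m → ℝ) (hv : Function.Injective v)
    (q : Polynomial ℝ) (hq : q.degree < (m : ℕ))
    (y A K : ℝ) (hA : 0 ≤ A) (hK : 0 ≤ K)
    (hr : ∀ i, |q.eval (v i)| ≤ A)
    (hnum : ∀ i j : Fin m, i ≠ j → |y - v j| ≤ K * |v i - v j|) :
    |q.eval y| ≤ m * A * K ^ (m - 1) := by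
  have hcard : (Finset.univ : Finset (Fin m)).card = m := by simp
  have hinj : Set.InjOn v (Finset.univ : Finset (Fin m)) := hv.injOn
  have hq' : q.degree < ((Finset.univ : Finset (Fin m)).card : ℕ) := by rwa [hcard]
  have hrep := Lagrange.eq_interpolate hinj hq'
  have heval : q.eval y = ∑ i : Fin m, q.eval (v i) * (Lagrange.basis Finset.univ v i).eval y := by
    conv_lhs => rw [hrep]
    rw [Lagrange.interpolate_apply, Polynomial.eval_finset_sum]
    refine Finset.sum_congr rfl fun i _ => ?_
    rw [Polynomial.eval_mul, Polynomial.eval_C]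
  rw [heval]
  have hbasis : ∀ i : Fin m, |(Lagrange.basis Finset.univ v i).eval y| ≤ K ^ (m - 1) := by
    intro i
    rw [Lagrange.basis, Polynomial.eval_prod]
    rw [Finset.abs_prod]
    have hcard' : ((Finset.univ : Finset (Fin m)).erase i).card = m - 1 := by
      rw [Finset.card_erase_of_mem (Finset.mem_univ i), hcard]
    calc ∏ j ∈ Finset.univ.erase i, |(Lagrange.basisDivisor (v i) (v j)).eval y|
        ≤ ∏ j ∈ Finset.univ.erase i, K := by
          refine Finset.prod_le_prod (fun j _ => abs_nonneg _) fun j hj => ?_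
          have hij : i ≠ j := (Finset.mem_erase.mp hj).1.symm
          have hvij : v i - v j ≠ 0 := sub_ne_zero_of_ne (fun h => hij (hv h))
          rw [Lagrange.basisDivisor, Polynomial.eval_mul, Polynomial.eval_C,
            Polynomial.eval_sub, Polynomial.eval_X, Polynomial.eval_C, abs_mul, abs_inv]
          rw [inv_mul_le_iff₀ (abs_pos.mpr hvij)]
          calc |y - v j| ≤ K * |v i - v j| := hnum i j hij
            _ = |v i - v j| * K := by ring
      _ = K ^ (m - 1) := by rw [Finset.prod_const, hcard']
  calc |∑ i : Fin m, q.eval (v i) * (Lagrange.basis Finset.univ v i).eval y|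
      ≤ ∑ i : Fin m, |q.eval (v i) * (Lagrange.basis Finset.univ v i).eval y| :=
        Finset.abs_sum_le_sum_abs _ _
    _ ≤ ∑ _i : Fin m, A * K ^ (m - 1) := by
        refine Finset.sum_le_sum fun i _ => ?_
        rw [abs_mul]
        exact mul_le_mul (hr i) (hbasis i) (abs_nonneg _) hA
    _ = m * A * K ^ (m - 1) := by
        rw [Finset.sum_const, hcard, nsmul_eq_mul]; ring

lemma key_ineq (E M₂ hmax σ k d W : ℝ) (hM₂ : 0 < M₂) (hmax0 : 0 < hmax)
    (hσ1 : 1 ≤ σ) (hk0 : 0 < k)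
    (F1 : 4 * M₂ * hmax < k * W) (F2 : (3 - 2*σ) * hmax < 4 * σ^2 * d) (hd0 : 0 < d)
    (F3 : k * (2*E*σ^2 + 1) ≤ 3 - 2*σ) : 2 * (E * M₂ * hmax^2) < W * d := by
  have hσ2 : (0:ℝ) < σ^2 := by positivity
  have A1 : 4 * M₂ * hmax * d < k * W * d := mul_lt_mul_of_pos_right F1 hd0
  have A1s : 4 * M₂ * hmax * d * σ^2 < k * W * d * σ^2 := mul_lt_mul_of_pos_right A1 hσ2
  have A2 : M₂ * hmax * ((3 - 2*σ) * hmax) < M₂ * hmax * (4 * σ^2 * d) :=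
    mul_lt_mul_of_pos_left F2 (by positivity)
  have A3 : (k * (2*E*σ^2 + 1)) * (M₂ * hmax^2) ≤ (3 - 2*σ) * (M₂ * hmax^2) :=
    mul_le_mul_of_nonneg_right F3 (by positivity)
  have B1 : k * ((2*E*σ^2 + 1) * (M₂ * hmax^2)) < k * (W * d * σ^2) := by
    nlinarith [A1s, A2, A3]
  have B2 : (2*E*σ^2 + 1) * (M₂ * hmax^2) < W * d * σ^2 := (mul_lt_mul_iff_right₀ hk0).mp B1
  nlinarith [B2, hσ2, mul_pos hM₂ (pow_pos hmax0 2)]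

set_option maxHeartbeats 1000000 in
/-- Existence of an intersection point: on a `σ` quasi-uniform grid with `σ < 3/2`, if
`[f'] > 0`, `a = x_{ja} ≤ μ ≤ b = x_{jb}`, `b − a ≤ 2h` and
`min(μ − a, b − μ) > (3 − 2σ)h/(4σ²)`, then there is a constant `0 < k < 1`, depending
only on `m` and `σ`, such that for `h < k·h_c` one has `p⁺(a) − p⁻(a) < 0` and
`p⁺(b) − p⁻(b) > 0`, hence `p⁺ − p⁻` has a zero in `[a,b]`. -/
theorem statement17 (m : ℕ) (hm : 2 ≤ m) (σ : ℝ) (hσ : σ < 3 / 2) :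
    ∃ k : ℝ, 0 < k ∧ k < 1 ∧
    ∀ (X : ℤ → ℝ), StrictMono X →
    ∀ hmin hmax : ℝ, 0 < hmin →
      (∀ i : ℤ, hmin ≤ X i - X (i - 1)) →
      (∀ i : ℤ, X i - X (i - 1) ≤ hmax) →
      hmax / hmin ≤ σ →
    ∀ (f f' f'' : ℝ → ℝ) (μ : ℝ),
      Continuous f →
      (∀ x ≠ μ, HasDerivAt f (f' x) x) →
      (∀ x ≠ μ, HasDerivAt f' (f'' x) x) →
      ContinuousOn f'' {μ}ᶜ →
    ∀ M₂ : ℝ, (∀ x ≠ μ, |f'' x| ≤ M₂) →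
    ∀ dL dR : ℝ,
      HasDerivWithinAt f dL (Set.Iic μ) μ →
      HasDerivWithinAt f dR (Set.Ici μ) μ →
      0 < dR - dL →
    ∀ ja jb : ℤ, X ja ≤ μ → μ ≤ X jb → X jb - X ja ≤ 2 * hmax →
      min (μ - X ja) (X jb - μ) > (3 - 2 * σ) * hmax / (4 * σ ^ 2) →
    ∀ pm pp : Polynomial ℝ, pm.degree < m → pp.degree < m →
      (∀ n : ℕ, n < m → pm.eval (X (ja - (n : ℤ))) = f (X (ja - (n : ℤ)))) →
      (∀ n : ℕ, n < m → pp.eval (X (jb + (n : ℤ))) = f (X (jb + (n : ℤ)))) →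
      hmax < k * (|dR - dL| / (4 * M₂)) →
      pp.eval (X ja) - pm.eval (X ja) < 0 ∧
      0 < pp.eval (X jb) - pm.eval (X jb) ∧
      ∃ y ∈ Set.Icc (X ja) (X jb), pp.eval y = pm.eval y := by
  classical
  set E : ℝ := 3 * m * ((m : ℝ) + 1) ^ 2 * (((m : ℝ) + 1) * |σ| + 1) ^ (m - 1) with hEdef
  have hm1 : (1 : ℝ) ≤ (m : ℝ) := by exact_mod_cast Nat.one_le_of_lt hm
  have hE0 : 0 < E := by
    apply mul_pos
    · apply mul_pos (by positivity)
      positivity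
    · positivity
  have h32 : 0 < 3 - 2 * σ := by linarith
  set k : ℝ := min (1/2) ((3 - 2*σ) / (2*E*σ^2 + 1)) with hkdef
  have hden : (0:ℝ) < 2*E*σ^2 + 1 := by positivity
  have hk0 : 0 < k := lt_min (by norm_num) (div_pos h32 hden)
  refine ⟨k, hk0, lt_of_le_of_lt (min_le_left _ _) (by norm_num), ?_⟩
  intro X hX hmin hmax hmin0 hlo hhi hquasi f f' f'' μ hf h1 h2 _hcont M₂ hM dL dR hdL hdR
    hjump ja jb haμ hμb hba hmindist pm pp hdegm hdegp hevalm hevalp hsmall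
  -- basic facts
  have hminmax : hmin ≤ hmax := le_trans (hlo 0) (hhi 0)
  have hmax0 : 0 < hmax := lt_of_lt_of_le hmin0 hminmax
  have hσ1 : 1 ≤ σ := le_trans ((one_le_div hmin0).mpr hminmax) hquasi
  have hσ0 : 0 < σ := by linarith
  have habsσ : |σ| = σ := abs_of_pos hσ0
  have hmaxσ : hmax ≤ σ * hmin := (div_le_iff₀ hmin0).mp hquasi
  have hM₂0 : 0 ≤ M₂ := le_trans (abs_nonneg _) (hM (μ+1) (by intro h; linarith))
  have hjump' : |dR - dL| = dR - dL := abs_of_pos hjump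
  have hM₂ : 0 < M₂ := by
    rcases eq_or_lt_of_le hM₂0 with h | h
    · exfalso
      rw [← h] at hsmall
      norm_num at hsmall
      linarith
    · exact h
  -- geometry of a, μ, b
  have hrhs0 : 0 < (3 - 2 * σ) * hmax / (4 * σ ^ 2) := by positivity
  have haμ' : 0 < μ - X ja := lt_trans hrhs0 (lt_of_lt_of_le hmindist (min_le_left _ _))
  have hμb' : 0 < X jb - μ := lt_trans hrhs0 (lt_of_lt_of_le hmindist (min_le_right _ _))
  have hab : X ja < X jb := by linarith
  have hjajb : ja < jb := (hX.lt_iff_lt).mp hab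
  -- grid facts
  have hstep_le := grid_le X hmax hhi
  have hstep_ge := grid_ge X hmin hlo
  have hsep : ∀ p q : ℤ, p ≠ q → hmin ≤ |X p - X q| := by
    intro p q hpq
    rcases lt_or_gt_of_ne hpq with h | h
    · have h1' := hstep_ge p q h.le
      have h2' : (1:ℝ) ≤ (q:ℝ) - p := by
        have : (1:ℤ) ≤ q - p := by omega
        exact_mod_cast this
      have h3' : 1 * hmin ≤ ((q:ℝ) - p) * hmin := mul_le_mul_of_nonneg_right h2' hmin0.le
      have : hmin ≤ X q - X p := le_trans (by linarith only [h3']) h1'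
      rw [abs_sub_comm, abs_of_nonneg (by linarith)]
      exact this
    · have h1' := hstep_ge q p h.le
      have h2' : (1:ℝ) ≤ (p:ℝ) - q := by
        have : (1:ℤ) ≤ p - q := by omega
        exact_mod_cast this
      have h3' : 1 * hmin ≤ ((p:ℝ) - q) * hmin := mul_le_mul_of_nonneg_right h2' hmin0.le
      have : hmin ≤ X p - X q := le_trans (by linarith only [h3']) h1'
      rw [abs_of_nonneg (by linarith)]
      exact this
  -- Taylor bounds
  have hTL := left_taylor f f' f'' μ M₂ dL hM₂0 hf h1 h2 hM hdL
  have hTR := right_taylor f f' f'' μ M₂ dR hM₂0 hf h1 h2 hM hdR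
  -- nodes
  set vL : Fin m → ℝ := fun n => X (ja - (n.val : ℤ)) with hvLdef
  set vR : Fin m → ℝ := fun n => X (jb + (n.val : ℤ)) with hvRdef
  have hvLinj : Function.Injective vL := by
    intro n n' h
    have := hX.injective h
    have : (n.val : ℤ) = (n'.val : ℤ) := by omega
    exact Fin.ext (by exact_mod_cast this)
  have hvRinj : Function.Injective vR := by
    intro n n' h
    have := hX.injective h
    have : (n.val : ℤ) = (n'.val : ℤ) := by omega
    exact Fin.ext (by exact_mod_cast this)
  have hjval : ∀ j : Fin m, (j.val : ℝ) ≤ (m : ℝ) - 1 := by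
    intro j
    have := j.isLt
    have : (j.val : ℝ) + 1 ≤ (m : ℝ) := by exact_mod_cast this
    linarith
  have hvL_le : ∀ j : Fin m, X ja - vL j ≤ ((m:ℝ) - 1) * hmax := by
    intro j
    have h := hstep_le (ja - (j.val : ℤ)) ja (by omega)
    have e : ((ja:ℝ) - ((ja - (j.val:ℤ) : ℤ) : ℝ)) = (j.val : ℝ) := by push_cast; ring
    rw [e] at h
    exact le_trans h (mul_le_mul_of_nonneg_right (hjval j) hmax0.le)
  have hvL_0 : ∀ j : Fin m, 0 ≤ X ja - vL j := by
    intro j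
    have : X (ja - (j.val : ℤ)) ≤ X ja := hX.monotone (by omega)
    simpa [hvLdef] using sub_nonneg.mpr this
  have hvR_le : ∀ j : Fin m, vR j - X jb ≤ ((m:ℝ) - 1) * hmax := by
    intro j
    have h := hstep_le jb (jb + (j.val : ℤ)) (by omega)
    have e : (((jb + (j.val:ℤ) : ℤ) : ℝ) - (jb:ℝ)) = (j.val : ℝ) := by push_cast; ring
    rw [e] at h
    exact le_trans h (mul_le_mul_of_nonneg_right (hjval j) hmax0.le)
  have hvR_0 : ∀ j : Fin m, 0 ≤ vR j - X jb := by
    intro j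
    have : X jb ≤ X (jb + (j.val : ℤ)) := hX.monotone (by omega)
    simpa [hvRdef] using sub_nonneg.mpr this
  have hering : ((m:ℝ)+1)*hmax = 2*hmax + ((m:ℝ)-1)*hmax := by ring
  have hμa2 : μ - X ja ≤ 2 * hmax := by linarith
  have hbμ2 : X jb - μ ≤ 2 * hmax := by linarith
  -- distances from evaluation points to nodes
  have hdist_aL : ∀ j : Fin m, |X ja - vL j| ≤ ((m:ℝ) + 1) * hmax := by
    intro j
    rw [abs_of_nonneg (hvL_0 j)]
    linarith [hvL_le j, hering, hmax0]
  have hdist_bL : ∀ j : Fin m, |X jb - vL j| ≤ ((m:ℝ) + 1) * hmax := by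
    intro j
    rw [abs_of_nonneg (by linarith [hvL_0 j])]
    linarith [hvL_le j, hering, hba]
  have hdist_aR : ∀ j : Fin m, |X ja - vR j| ≤ ((m:ℝ) + 1) * hmax := by
    intro j
    rw [abs_sub_comm, abs_of_nonneg (by linarith [hvR_0 j])]
    linarith [hvR_le j, hering, hba]
  have hdist_bR : ∀ j : Fin m, |X jb - vR j| ≤ ((m:ℝ) + 1) * hmax := by
    intro j
    rw [abs_sub_comm, abs_of_nonneg (hvR_0 j)]
    linarith [hvR_le j, hering, hmax0]
  -- distances from nodes to μ
  have hμL : ∀ j : Fin m, (vL j - μ)^2 ≤ (((m:ℝ) + 1) * hmax)^2 := by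
    intro j
    have h0 : |vL j - μ| ≤ ((m:ℝ) + 1) * hmax := by
      rw [abs_sub_comm, abs_of_nonneg (by linarith [hvL_0 j])]
      linarith [hvL_le j, hering, hμa2]
    calc (vL j - μ)^2 = |vL j - μ|^2 := (sq_abs _).symm
      _ ≤ (((m:ℝ) + 1) * hmax)^2 := by
          apply pow_le_pow_left₀ (abs_nonneg _) h0
  have hμR : ∀ j : Fin m, (vR j - μ)^2 ≤ (((m:ℝ) + 1) * hmax)^2 := by
    intro j
    have h0 : |vR j - μ| ≤ ((m:ℝ) + 1) * hmax := by
      rw [abs_of_nonneg (by linarith [hvR_0 j])]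
      linarith [hvR_le j, hering, hbμ2]
    calc (vR j - μ)^2 = |vR j - μ|^2 := (sq_abs _).symm
      _ ≤ (((m:ℝ) + 1) * hmax)^2 := by
          apply pow_le_pow_left₀ (abs_nonneg _) h0
  -- linear polynomials
  set Lm : Polynomial ℝ := Polynomial.C dL * Polynomial.X + Polynomial.C (f μ - dL * μ) with hLmdef
  set Lp : Polynomial ℝ := Polynomial.C dR * Polynomial.X + Polynomial.C (f μ - dR * μ) with hLpdef
  have hLm_eval : ∀ y : ℝ, Lm.eval y = dL * y + (f μ - dL * μ) := by intro y; simp [hLmdef]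
  have hLp_eval : ∀ y : ℝ, Lp.eval y = dR * y + (f μ - dR * μ) := by intro y; simp [hLpdef]
  have hcast1m : (1 : WithBot ℕ) < (m : WithBot ℕ) := by exact_mod_cast hm
  set qm : Polynomial ℝ := pm - Lm with hqmdef
  set qp : Polynomial ℝ := pp - Lp with hqpdef
  have hqm_deg : qm.degree < (m : ℕ) :=
    lt_of_le_of_lt (Polynomial.degree_sub_le _ _)
      (max_lt hdegm (lt_of_le_of_lt (Polynomial.degree_linear_le) hcast1m))
  have hqp_deg : qp.degree < (m : ℕ) :=
    lt_of_le_of_lt (Polynomial.degree_sub_le _ _)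
      (max_lt hdegp (lt_of_le_of_lt (Polynomial.degree_linear_le) hcast1m))
  -- values at nodes
  set A : ℝ := 3 * M₂ * (((m:ℝ) + 1) * hmax)^2 with hAdef
  have hA0 : 0 ≤ A := by positivity
  have hqm_node : ∀ i : Fin m, |qm.eval (vL i)| ≤ A := by
    intro i
    have hev : pm.eval (vL i) = f (vL i) := hevalm i.val i.isLt
    have heq : qm.eval (vL i) = f (vL i) - f μ - dL * (vL i - μ) := by
      rw [hqmdef, Polynomial.eval_sub, hev, hLm_eval]; ring
    rw [heq]
    have hle : vL i ≤ μ := by linarith [hvL_0 i]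
    calc |f (vL i) - f μ - dL * (vL i - μ)| ≤ 3 * M₂ * (vL i - μ)^2 := hTL (vL i) hle
      _ ≤ A := by
          rw [hAdef]
          have := mul_le_mul_of_nonneg_left (hμL i) (by linarith : (0:ℝ) ≤ 3 * M₂)
          linarith
  have hqp_node : ∀ i : Fin m, |qp.eval (vR i)| ≤ A := by
    intro i
    have hev : pp.eval (vR i) = f (vR i) := hevalp i.val i.isLt
    have heq : qp.eval (vR i) = f (vR i) - f μ - dR * (vR i - μ) := by
      rw [hqpdef, Polynomial.eval_sub, hev, hLp_eval]; ring
    rw [heq]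
    have hle : μ ≤ vR i := by linarith [hvR_0 i]
    calc |f (vR i) - f μ - dR * (vR i - μ)| ≤ 3 * M₂ * (vR i - μ)^2 := hTR (vR i) hle
      _ ≤ A := by
          rw [hAdef]
          have := mul_le_mul_of_nonneg_left (hμR i) (by linarith : (0:ℝ) ≤ 3 * M₂)
          linarith
  -- generic evaluation bound
  set K : ℝ := ((m:ℝ) + 1) * σ with hKdef
  have hK0 : 0 ≤ K := by positivity
  have hKE : (m:ℝ) * A * K ^ (m-1) ≤ E * M₂ * hmax^2 := by
    have hKle : K ≤ ((m:ℝ) + 1) * |σ| + 1 := by rw [hKdef, habsσ]; linarith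
    have hpow : K ^ (m-1) ≤ (((m:ℝ) + 1) * |σ| + 1) ^ (m-1) := pow_le_pow_left₀ hK0 hKle _
    have : (m:ℝ) * A * K ^ (m-1) = (3 * m * ((m:ℝ)+1)^2 * M₂ * hmax^2) * K ^ (m-1) := by
      rw [hAdef]; ring
    rw [this, hEdef]
    have h3 : (0:ℝ) ≤ 3 * m * ((m:ℝ)+1)^2 * M₂ * hmax^2 := by positivity
    calc (3 * m * ((m:ℝ)+1)^2 * M₂ * hmax^2) * K ^ (m-1)
        ≤ (3 * m * ((m:ℝ)+1)^2 * M₂ * hmax^2) * (((m:ℝ) + 1) * |σ| + 1) ^ (m-1) :=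
          mul_le_mul_of_nonneg_left hpow h3
      _ = 3 * ↑m * (↑m + 1) ^ 2 * (((m:ℝ) + 1) * |σ| + 1) ^ (m-1) * M₂ * hmax ^ 2 := by ring
  have hbound : ∀ (v : Fin m → ℝ) (q : Polynomial ℝ), Function.Injective v →
      q.degree < (m : ℕ) → (∀ i, |q.eval (v i)| ≤ A) →
      ∀ y : ℝ, (∀ j, |y - v j| ≤ ((m:ℝ) + 1) * hmax) →
      (∀ i j : Fin m, i ≠ j → hmin ≤ |v i - v j|) →
      |q.eval y| ≤ E * M₂ * hmax^2 := by
    intro v q hvinj hqdeg hnode y hy hsepv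
    have hnum : ∀ i j : Fin m, i ≠ j → |y - v j| ≤ K * |v i - v j| := by
      intro i j hij
      calc |y - v j| ≤ ((m:ℝ) + 1) * hmax := hy j
        _ ≤ ((m:ℝ) + 1) * (σ * hmin) := by
            apply mul_le_mul_of_nonneg_left hmaxσ (by positivity)
        _ = K * hmin := by rw [hKdef]; ring
        _ ≤ K * |v i - v j| := mul_le_mul_of_nonneg_left (hsepv i j hij) hK0
    have := interp_bound m (by omega) v hvinj q hqdeg y A K hA0 hK0 hnode hnum
    exact le_trans this hKE
  have hsepL : ∀ i j : Fin m, i ≠ j → hmin ≤ |vL i - vL j| := by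
    intro i j hij
    apply hsep
    intro h
    exact hij (Fin.ext (by omega))
  have hsepR : ∀ i j : Fin m, i ≠ j → hmin ≤ |vR i - vR j| := by
    intro i j hij
    apply hsep
    intro h
    exact hij (Fin.ext (by omega))
  have hqm_a := hbound vL qm hvLinj hqm_deg hqm_node (X ja) hdist_aL hsepL
  have hqm_b := hbound vL qm hvLinj hqm_deg hqm_node (X jb) hdist_bL hsepL
  have hqp_a := hbound vR qp hvRinj hqp_deg hqp_node (X ja) hdist_aR hsepR
  have hqp_b := hbound vR qp hvRinj hqp_deg hqp_node (X jb) hdist_bR hsepR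
  -- endpoint identities
  have iden : ∀ y : ℝ, pp.eval y - pm.eval y
      = (dR - dL) * (y - μ) + (qp.eval y - qm.eval y) := by
    intro y
    have e1 : qp.eval y = pp.eval y - Lp.eval y := by rw [hqpdef, Polynomial.eval_sub]
    have e2 : qm.eval y = pm.eval y - Lm.eval y := by rw [hqmdef, Polynomial.eval_sub]
    rw [e1, e2, hLp_eval, hLm_eval]; ring
  -- key quantitative inequalities
  have F1 : 4 * M₂ * hmax < k * (dR - dL) := by
    rw [hjump'] at hsmall
    have h4 : (0:ℝ) < 4 * M₂ := by linarith
    have e : k * ((dR - dL) / (4 * M₂)) = k * (dR - dL) / (4 * M₂) := by ring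
    rw [e] at hsmall
    have := (lt_div_iff₀ h4).mp hsmall
    linarith [this]
  have F3 : k * (2*E*σ^2 + 1) ≤ 3 - 2*σ := by
    have := min_le_right (1/2 : ℝ) ((3 - 2*σ) / (2*E*σ^2 + 1))
    rw [← hkdef] at this
    calc k * (2*E*σ^2 + 1) ≤ ((3 - 2*σ) / (2*E*σ^2 + 1)) * (2*E*σ^2 + 1) :=
          mul_le_mul_of_nonneg_right this hden.le
      _ = 3 - 2*σ := div_mul_cancel₀ _ (ne_of_gt hden)
  have key : ∀ d : ℝ, (3 - 2 * σ) * hmax / (4 * σ ^ 2) < d →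
      2 * (E * M₂ * hmax^2) < (dR - dL) * d := by
    intro d hd
    have F2 : (3 - 2*σ) * hmax < 4 * σ^2 * d := by
      rw [div_lt_iff₀ (by positivity)] at hd
      linarith
    have hd0 : 0 < d := lt_trans hrhs0 hd
    exact key_ineq E M₂ hmax σ k d (dR - dL) hM₂ hmax0 hσ1 hk0 F1 F2 hd0 F3
  have keyA : 2 * (E * M₂ * hmax^2) < (dR - dL) * (μ - X ja) :=
    key (μ - X ja) (lt_of_lt_of_le hmindist (min_le_left _ _))
  have keyB : 2 * (E * M₂ * hmax^2) < (dR - dL) * (X jb - μ) :=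
    key (X jb - μ) (lt_of_lt_of_le hmindist (min_le_right _ _))
  have goalA : pp.eval (X ja) - pm.eval (X ja) < 0 := by
    rw [iden (X ja)]
    have b1 := (abs_le.mp hqp_a).2
    have b2 := (abs_le.mp hqm_a).1
    linarith only [b1, b2, keyA]
  have goalB : 0 < pp.eval (X jb) - pm.eval (X jb) := by
    rw [iden (X jb)]
    have b1 := (abs_le.mp hqp_b).1
    have b2 := (abs_le.mp hqm_b).2
    linarith only [b1, b2, keyB]
  refine ⟨goalA, goalB, ?_⟩
  have hcont2 : ContinuousOn (fun y => pp.eval y - pm.eval y) (Set.Icc (X ja) (X jb)) :=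
    (pp.continuous_aeval.sub pm.continuous_aeval).continuousOn
  have hmem : (0:ℝ) ∈ Set.Icc (pp.eval (X ja) - pm.eval (X ja)) (pp.eval (X jb) - pm.eval (X jb)) :=
    ⟨goalA.le, goalB.le⟩
  obtain ⟨y, hy, hy0⟩ := intermediate_value_Icc hab.le hcont2 hmem
  exact ⟨y, hy, by linarith [hy0, sub_eq_zero.mp hy0]⟩
end

section
/- Let m ≥ 2, let X be a σ quasi-uniform grid with σ < 3/2, and let f: ℝ → ℝ be continuous on ℝ, C^m on ℝ∖{μ} with derivatives up to order m uniformly bounded there and jump [f'] := f'(μ⁺) − f'(μ⁻) ≠ 0; write M_k := sup_{ℝ∖{μ}} |f^{(k)}| and h_c := |[f']|/(4M₂). Let a ≤ μ ≤ b be grid points with b − a ≤ 2h (h := h_max) and min(μ − a, b − μ) > (3−2σ)h/(4σ²), let p⁻ be the Lagrange polynomial of degree ≤ m−1 interpolating f at the m consecutive grid nodes ending at a, and p⁺ the one interpolating f at the m consecutive grid nodes starting at b. Then there exist constants C > 0 and 0 < K < 1, depending only on m and σ, such that if h < K·h_c and y ∈ [a,b] is a zero of p⁺ − p⁻, then |μ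 − y| ≤ C h^m M_m / |[f']|. -/
open Polynomial Finset Set Filter Topology

namespace St18

lemma derivative_finset_prod {ι : Type*} [DecidableEq ι] (s : Finset ι) (f : ι → Polynomial ℝ) :
    Polynomial.derivative (∏ i ∈ s, f i) =
      ∑ i ∈ s, (∏ j ∈ s.erase i, f j) * Polynomial.derivative (f i) := by
  induction s using Finset.induction_on with
  | empty => simp
  | @insert a s ha ih =>
    rw [Finset.prod_insert ha, derivative_mul, ih, Finset.sum_insert ha,
      Finset.erase_insert ha, Finset.mul_sum]
    congr 1
    · ring
    · apply Finset.sum_congr rfl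
      intro i hi
      rw [Finset.erase_insert_of_ne (by rintro rfl; exact ha hi), Finset.prod_insert
        (fun h => ha (Finset.mem_of_mem_erase h))]
      ring

lemma interp_bounds (m : ℕ) (hm : 1 ≤ m) (v : ℕ → ℝ) (q : Polynomial ℝ)
    (hq : q.degree < (m : ℕ))
    (δ R : ℝ) (hδ : 0 < δ) (hδR : δ ≤ R)
    (hsep : ∀ i ∈ Finset.range m, ∀ j ∈ Finset.range m, i ≠ j → δ ≤ |v i - v j|)
    (B : ℝ) (hB : ∀ i ∈ Finset.range m, |q.eval (v i)| ≤ B)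
    (x : ℝ) (hx : ∀ j ∈ Finset.range m, |x - v j| ≤ R) :
    |q.eval x| ≤ m * (R / δ) ^ m * B ∧
      |(Polynomial.derivative q).eval x| ≤ m * m * (R / δ) ^ m * B / δ := by
  have hρ0 : 0 < R / δ := div_pos (lt_of_lt_of_le hδ hδR) hδ
  have hρ1 : 1 ≤ R / δ := (one_le_div hδ).2 hδR
  set ρ : ℝ := R / δ with hρ
  have hB0 : 0 ≤ B := le_trans (abs_nonneg _) (hB 0 (Finset.mem_range.2 hm))
  -- injectivity
  have hinj : Set.InjOn v (Finset.range m : Finset ℕ) := by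
    intro i hi j hj hij
    by_contra hne
    have := hsep i (by simpa using hi) j (by simpa using hj) hne
    rw [hij, sub_self, abs_zero] at this
    linarith
  -- representation
  have hrep : q = Lagrange.interpolate (Finset.range m) v (fun i => q.eval (v i)) := by
    apply Lagrange.eq_interpolate hinj
    simpa using hq
  -- bound on each basisDivisor eval
  have hbd : ∀ i ∈ Finset.range m, ∀ j ∈ (Finset.range m).erase i,
      |Polynomial.eval x (Lagrange.basisDivisor (v i) (v j))| ≤ ρ := by
    intro i hi j hj
    have hji : j ≠ i := (Finset.mem_erase.1 hj).1
    have hjm : j ∈ Finset.range m := (Finset.mem_erase.1 hj).2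
    have hsep' := hsep i hi j hjm (Ne.symm hji)
    have hxj := hx j hjm
    rw [Lagrange.basisDivisor]
    rw [Polynomial.eval_mul, Polynomial.eval_C, Polynomial.eval_sub, Polynomial.eval_X,
      Polynomial.eval_C, abs_mul, abs_inv]
    rw [hρ, div_eq_inv_mul]
    apply mul_le_mul _ hxj (abs_nonneg _) (by positivity)
    apply inv_anti₀ hδ hsep'
  -- bound on basis eval
  have hbasis : ∀ i ∈ Finset.range m,
      |Polynomial.eval x (Lagrange.basis (Finset.range m) v i)| ≤ ρ ^ m := by
    intro i hi
    rw [Lagrange.basis, Polynomial.eval_prod, Finset.abs_prod]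
    calc ∏ j ∈ (Finset.range m).erase i, |Polynomial.eval x (Lagrange.basisDivisor (v i) (v j))|
        ≤ ∏ _j ∈ (Finset.range m).erase i, ρ :=
          Finset.prod_le_prod (fun j _ => abs_nonneg _) (hbd i hi)
      _ = ρ ^ ((Finset.range m).erase i).card := by rw [Finset.prod_const]
      _ ≤ ρ ^ m := by
          apply pow_le_pow_right₀ hρ1
          exact le_trans (Finset.card_erase_le) (by simp)
  -- bound on derivative of basis eval
  have hbasis' : ∀ i ∈ Finset.range m,
      |Polynomial.eval x (Polynomial.derivative (Lagrange.basis (Finset.range m) v i))|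
        ≤ m * ρ ^ m / δ := by
    intro i hi
    rw [Lagrange.basis, derivative_finset_prod]
    rw [Polynomial.eval_finset_sum]
    calc |∑ j ∈ (Finset.range m).erase i, Polynomial.eval x
            ((∏ k ∈ ((Finset.range m).erase i).erase j, Lagrange.basisDivisor (v i) (v k)) *
              Polynomial.derivative (Lagrange.basisDivisor (v i) (v j)))|
        ≤ ∑ j ∈ (Finset.range m).erase i, |Polynomial.eval x
            ((∏ k ∈ ((Finset.range m).erase i).erase j, Lagrange.basisDivisor (v i) (v k)) *
              Polynomial.derivative (Lagrange.basisDivisor (v i) (v j)))| :=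
          Finset.abs_sum_le_sum_abs _ _
      _ ≤ ∑ _j ∈ (Finset.range m).erase i, ρ ^ m * δ⁻¹ := by
          apply Finset.sum_le_sum
          intro j hj
          rw [Polynomial.eval_mul, abs_mul]
          apply mul_le_mul _ _ (abs_nonneg _) (by positivity)
          · rw [Polynomial.eval_prod, Finset.abs_prod]
            calc ∏ k ∈ ((Finset.range m).erase i).erase j,
                  |Polynomial.eval x (Lagrange.basisDivisor (v i) (v k))|
                ≤ ∏ _k ∈ ((Finset.range m).erase i).erase j, ρ :=
                  Finset.prod_le_prod (fun k _ => abs_nonneg _)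
                    (fun k hk => hbd i hi k (Finset.mem_of_mem_erase hk))
              _ = ρ ^ (((Finset.range m).erase i).erase j).card := by rw [Finset.prod_const]
              _ ≤ ρ ^ m := by
                  apply pow_le_pow_right₀ hρ1
                  exact le_trans (Finset.card_erase_le) (le_trans (Finset.card_erase_le) (by simp))
          · rw [Lagrange.basisDivisor, Polynomial.derivative_C_mul, Polynomial.derivative_X_sub_C,
              mul_one, Polynomial.eval_C, abs_inv]
            have hji : j ≠ i := (Finset.mem_erase.1 hj).1
            have hjm : j ∈ Finset.range m := (Finset.mem_erase.1 hj).2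
            exact inv_anti₀ hδ (hsep i hi j hjm (Ne.symm hji))
      _ = ((Finset.range m).erase i).card * (ρ ^ m * δ⁻¹) := by rw [Finset.sum_const, nsmul_eq_mul]
      _ ≤ m * ρ ^ m / δ := by
          rw [div_eq_mul_inv, mul_assoc]
          apply mul_le_mul_of_nonneg_right _ (by positivity)
          exact_mod_cast le_trans (Nat.cast_le.2 (le_trans Finset.card_erase_le (by simp)))
            (le_refl (m : ℝ))
  constructor
  · conv_lhs => rw [hrep]
    rw [Lagrange.interpolate_apply, Polynomial.eval_finset_sum]
    calc |∑ i ∈ Finset.range m, Polynomial.eval x (Polynomial.C (q.eval (v i)) *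
            Lagrange.basis (Finset.range m) v i)|
        ≤ ∑ i ∈ Finset.range m, |Polynomial.eval x (Polynomial.C (q.eval (v i)) *
            Lagrange.basis (Finset.range m) v i)| := Finset.abs_sum_le_sum_abs _ _
      _ ≤ ∑ _i ∈ Finset.range m, B * ρ ^ m := by
          apply Finset.sum_le_sum
          intro i hi
          rw [Polynomial.eval_mul, Polynomial.eval_C, abs_mul]
          exact mul_le_mul (hB i hi) (hbasis i hi) (abs_nonneg _) hB0
      _ = m * (B * ρ ^ m) := by rw [Finset.sum_const, Finset.card_range, nsmul_eq_mul]
      _ = m * ρ ^ m * B := by ring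
  · conv_lhs => rw [hrep]
    rw [Lagrange.interpolate_apply, map_sum, Polynomial.eval_finset_sum]
    calc |∑ i ∈ Finset.range m, Polynomial.eval x (Polynomial.derivative
            (Polynomial.C (q.eval (v i)) * Lagrange.basis (Finset.range m) v i))|
        ≤ ∑ i ∈ Finset.range m, |Polynomial.eval x (Polynomial.derivative
            (Polynomial.C (q.eval (v i)) * Lagrange.basis (Finset.range m) v i))| :=
          Finset.abs_sum_le_sum_abs _ _
      _ ≤ ∑ _i ∈ Finset.range m, B * (m * ρ ^ m / δ) := by
          apply Finset.sum_le_sum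
          intro i hi
          rw [Polynomial.derivative_C_mul, Polynomial.eval_mul, Polynomial.eval_C, abs_mul]
          exact mul_le_mul (hB i hi) (hbasis' i hi) (abs_nonneg _) hB0
      _ = m * (B * (m * ρ ^ m / δ)) := by rw [Finset.sum_const, Finset.card_range, nsmul_eq_mul]
      _ = m * m * ρ ^ m * B / δ := by ring


lemma chainTaylor (μ : ℝ) (fd : ℕ → ℝ → ℝ) (m : ℕ)
    (hderiv : ∀ l : ℕ, l < m → ∀ x : ℝ, x ≠ μ → HasDerivAt (fd l) (fd (l + 1) x) x)
    (M : ℕ → ℝ) (hM : ∀ l : ℕ, 1 ≤ l → l ≤ m → ∀ x : ℝ, x ≠ μ → |fd l x| ≤ M l)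
    (n : ℕ) (hn1 : 1 ≤ n) (hnm : n ≤ m) :
    ∀ (j l : ℕ), l + j = n → ∀ s : Set ℝ, Convex ℝ s → μ ∉ s →
    ∀ d : ℝ, (∀ x ∈ s, ∀ y ∈ s, |x - y| ≤ d) →
    ∀ c ∈ s, ∀ x ∈ s,
      |fd l x - ∑ k ∈ Finset.range j, fd (l + k) c * (x - c) ^ k / (k.factorial : ℝ)|
        ≤ M n * d ^ j := by
  intro j
  induction j with
  | zero =>
    intro l hl s _ hμs d _ c hc x hx
    simp only [Finset.range_zero, Finset.sum_empty, sub_zero, pow_zero, mul_one]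
    have hln : l = n := by omega
    subst hln
    exact hM l hn1 hnm x (by rintro rfl; exact hμs hx)
  | succ j ih =>
    intro l hl s hconv hμs d hdiam c hc x hx
    have hd0 : 0 ≤ d := le_trans (abs_nonneg _) (hdiam c hc c hc)
    have hMn : 0 ≤ M n := by
      have hcμ : c ≠ μ := by rintro rfl; exact hμs hc
      exact le_trans (abs_nonneg _) (hM n hn1 hnm c hcμ)
    set g : ℝ → ℝ := fun t =>
      fd l t - ∑ k ∈ Finset.range (j + 1), fd (l + k) c * (t - c) ^ k / (k.factorial : ℝ)
      with hg
    set g' : ℝ → ℝ := fun t =>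
      fd (l + 1) t - ∑ k ∈ Finset.range j, fd (l + 1 + k) c * (t - c) ^ k / (k.factorial : ℝ)
      with hg'
    have hgc : g c = 0 := by
      rw [hg]
      simp only
      rw [Finset.sum_eq_single 0]
      · simp
      · intro k _ hk
        rw [sub_self, zero_pow hk, mul_zero, zero_div]
      · intro h; simp at h
    have hgderiv : ∀ t : ℝ, t ≠ μ → HasDerivAt g (g' t) t := by
      intro t ht
      have h1 : HasDerivAt (fd l) (fd (l + 1) t) t := hderiv l (by omega) t ht
      have h2 : HasDerivAt (fun t => ∑ k ∈ Finset.range (j + 1),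
          fd (l + k) c * (t - c) ^ k / (k.factorial : ℝ))
          (∑ k ∈ Finset.range (j + 1),
            fd (l + k) c * ((k : ℝ) * (t - c) ^ (k - 1)) / (k.factorial : ℝ)) t := by
        apply HasDerivAt.fun_sum
        intro k _
        have : HasDerivAt (fun t : ℝ => (t - c) ^ k) ((k : ℝ) * (t - c) ^ (k - 1)) t := by
          simpa using ((hasDerivAt_id t).sub_const c).fun_pow k
        exact (this.const_mul (fd (l + k) c)).div_const (k.factorial : ℝ)
      have hsum : ∑ k ∈ Finset.range (j + 1),
          fd (l + k) c * ((k : ℝ) * (t - c) ^ (k - 1)) / (k.factorial : ℝ)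
          = ∑ k ∈ Finset.range j, fd (l + 1 + k) c * (t - c) ^ k / (k.factorial : ℝ) := by
        rw [Finset.sum_range_succ']
        simp only [Nat.cast_zero, zero_mul, mul_zero, zero_div, add_zero]
        apply Finset.sum_congr rfl
        intro k _
        have hkfac : ((k + 1).factorial : ℝ) = (k + 1) * (k.factorial : ℝ) := by
          rw [Nat.factorial_succ]; push_cast; ring
        have hk1 : ((k : ℝ) + 1) ≠ 0 := by positivity
        have hkf : (k.factorial : ℝ) ≠ 0 := by positivity
        rw [hkfac]
        have : l + (k + 1) = l + 1 + k := by omega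
        rw [this]
        push_cast
        field_simp
      rw [hg']
      simpa [hsum] using h1.fun_sub h2
    have hg'bound : ∀ t ∈ s, |g' t| ≤ M n * d ^ j := by
      intro t ht
      exact ih (l + 1) (by omega) s hconv hμs d hdiam c hc t ht
    have key : |g x - g c| ≤ M n * d ^ j * |x - c| := by
      have := Convex.norm_image_sub_le_of_norm_hasDerivWithin_le
        (f := g) (f' := g') (C := M n * d ^ j) (s := s)
        (fun t ht => (hgderiv t (by rintro rfl; exact hμs ht)).hasDerivWithinAt)
        (fun t ht => by rw [Real.norm_eq_abs]; exact hg'bound t ht) hconv hc hx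
      simpa [Real.norm_eq_abs] using this
    rw [hgc, sub_zero] at key
    calc |g x| ≤ M n * d ^ j * |x - c| := key
      _ ≤ M n * d ^ j * d := by
          apply mul_le_mul_of_nonneg_left (hdiam x hx c hc)
          positivity
      _ = M n * d ^ (j + 1) := by ring


section OneSided

variable (μ : ℝ) (f : ℝ → ℝ) (fd : ℕ → ℝ → ℝ) (m : ℕ) (M : ℕ → ℝ)

lemma taylor_at_mu_left
    (hderiv : ∀ l : ℕ, l < m → ∀ x : ℝ, x ≠ μ → HasDerivAt (fd l) (fd (l + 1) x) x)
    (hM : ∀ l : ℕ, 1 ≤ l → l ≤ m → ∀ x : ℝ, x ≠ μ → |fd l x| ≤ M l)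
    (hcont : Continuous f) (hf0 : fd 0 = f)
    (n : ℕ) (hn1 : 1 ≤ n) (hnm : n ≤ m) (c : ℝ) (hc : c < μ) (d : ℝ) (hd : μ - c ≤ d) :
    |f μ - ∑ k ∈ Finset.range n, fd k c * (μ - c) ^ k / (k.factorial : ℝ)| ≤ M n * d ^ n := by
  have hφ : Continuous fun w : ℝ =>
      |f w - ∑ k ∈ Finset.range n, fd k c * (w - c) ^ k / (k.factorial : ℝ)| := by
    apply Continuous.abs
    apply hcont.sub
    apply continuous_finset_sum
    intro k _
    exact (continuous_const.mul ((continuous_id.sub continuous_const).pow k)).div_const _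
  apply le_of_tendsto (f := fun w : ℝ =>
      |f w - ∑ k ∈ Finset.range n, fd k c * (w - c) ^ k / (k.factorial : ℝ)|)
      (x := 𝓝[<] μ)
    (hφ.continuousAt.tendsto.mono_left nhdsWithin_le_nhds)
  filter_upwards [Ioo_mem_nhdsLT_of_mem (Set.mem_Ioc.2 ⟨hc, le_refl μ⟩)] with w hw
  have hkey := chainTaylor μ fd m hderiv M hM n hn1 hnm n 0 (by omega)
    (Set.Icc c w) (convex_Icc c w)
    (fun hmem => absurd hmem.2 (not_le.2 hw.2)) d
    (fun x hx y hy => by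
      rw [abs_sub_le_iff]
      constructor <;> [skip; skip] <;>
      · have h1 := hx.1; have h2 := hx.2; have h3 := hy.1; have h4 := hy.2
        have := hw.2
        linarith)
    c (Set.left_mem_Icc.2 (le_of_lt hw.1)) w (Set.right_mem_Icc.2 (le_of_lt hw.1))
  simp only [zero_add] at hkey
  rwa [hf0] at hkey

lemma taylor_at_mu_right
    (hderiv : ∀ l : ℕ, l < m → ∀ x : ℝ, x ≠ μ → HasDerivAt (fd l) (fd (l + 1) x) x)
    (hM : ∀ l : ℕ, 1 ≤ l → l ≤ m → ∀ x : ℝ, x ≠ μ → |fd l x| ≤ M l)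
    (hcont : Continuous f) (hf0 : fd 0 = f)
    (n : ℕ) (hn1 : 1 ≤ n) (hnm : n ≤ m) (c : ℝ) (hc : μ < c) (d : ℝ) (hd : c - μ ≤ d) :
    |f μ - ∑ k ∈ Finset.range n, fd k c * (μ - c) ^ k / (k.factorial : ℝ)| ≤ M n * d ^ n := by
  have hφ : Continuous fun w : ℝ =>
      |f w - ∑ k ∈ Finset.range n, fd k c * (w - c) ^ k / (k.factorial : ℝ)| := by
    apply Continuous.abs
    apply hcont.sub
    apply continuous_finset_sum
    intro k _
    exact (continuous_const.mul ((continuous_id.sub continuous_const).pow k)).div_const _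
  apply le_of_tendsto (f := fun w : ℝ =>
      |f w - ∑ k ∈ Finset.range n, fd k c * (w - c) ^ k / (k.factorial : ℝ)|)
      (x := 𝓝[>] μ)
    (hφ.continuousAt.tendsto.mono_left nhdsWithin_le_nhds)
  filter_upwards [Ioo_mem_nhdsGT_of_mem (Set.mem_Ico.2 ⟨le_refl μ, hc⟩)] with w hw
  have hkey := chainTaylor μ fd m hderiv M hM n hn1 hnm n 0 (by omega)
    (Set.Icc w c) (convex_Icc w c)
    (fun hmem => absurd hmem.1 (not_le.2 hw.1)) d
    (fun x hx y hy => by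
      rw [abs_sub_le_iff]
      constructor <;> [skip; skip] <;>
      · have h1 := hx.1; have h2 := hx.2; have h3 := hy.1; have h4 := hy.2
        have := hw.1
        linarith)
    c (Set.right_mem_Icc.2 (le_of_lt hw.2)) w (Set.left_mem_Icc.2 (le_of_lt hw.2))
  simp only [zero_add] at hkey
  rwa [hf0] at hkey

lemma slope_left
    (hderiv : ∀ l : ℕ, l < m → ∀ x : ℝ, x ≠ μ → HasDerivAt (fd l) (fd (l + 1) x) x)
    (hM : ∀ l : ℕ, 1 ≤ l → l ≤ m → ∀ x : ℝ, x ≠ μ → |fd l x| ≤ M l)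
    (hcont : Continuous f) (hf0 : fd 0 = f) (hm2 : 2 ≤ m)
    (dL : ℝ) (hdL : HasDerivWithinAt f dL (Set.Iic μ) μ)
    (t : ℝ) (ht : t < μ) : |fd 1 t - dL| ≤ M 2 * (μ - t) := by
  have hslope : Tendsto (slope f μ) (𝓝[<] μ) (𝓝 dL) := by
    have h := hasDerivWithinAt_iff_tendsto_slope.1 hdL
    rwa [Set.Iic_diff_right] at h
  have hBlim : Tendsto (fun u : ℝ =>
      |dL - slope f μ u| + M 2 * (μ - u) + M 2 * (u - t)) (𝓝[<] μ)
      (𝓝 (M 2 * (μ - t))) := by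
    have h1 : Tendsto (fun u : ℝ => |dL - slope f μ u|) (𝓝[<] μ) (𝓝 0) := by
      have := (tendsto_const_nhds (x := dL) (f := 𝓝[<] μ)).sub hslope
      simpa using this.abs
    have h2 : Tendsto (fun u : ℝ => M 2 * (μ - u)) (𝓝[<] μ) (𝓝 0) := by
      have : Tendsto (fun u : ℝ => M 2 * (μ - u)) (𝓝 μ) (𝓝 (M 2 * (μ - μ))) := by
        apply Continuous.tendsto
        continuity
      simpa using this.mono_left nhdsWithin_le_nhds
    have h3 : Tendsto (fun u : ℝ => M 2 * (u - t)) (𝓝[<] μ) (𝓝 (M 2 * (μ - t))) := by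
      have : Tendsto (fun u : ℝ => M 2 * (u - t)) (𝓝 μ) (𝓝 (M 2 * (μ - t))) := by
        apply Continuous.tendsto
        continuity
      exact this.mono_left nhdsWithin_le_nhds
    simpa using (h1.add h2).add h3
  apply ge_of_tendsto hBlim
  filter_upwards [Ioo_mem_nhdsLT_of_mem (Set.mem_Ioc.2 ⟨ht, le_refl μ⟩)] with u hu
  have htu : t < u := hu.1
  have huμ : u < μ := hu.2
  -- |fd 1 u - fd 1 t| ≤ M 2 * (u - t)
  have h1 : |fd 1 u - fd 1 t| ≤ M 2 * (u - t) := by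
    have hkey := chainTaylor μ fd m hderiv M hM 2 (by omega) hm2 1 1 rfl
      (Set.Icc t u) (convex_Icc t u)
      (fun hmem => absurd hmem.2 (not_le.2 huμ)) (u - t)
      (fun x hx y hy => by
        rw [abs_sub_le_iff]
        constructor <;> [skip; skip] <;>
        · have h1 := hx.1; have h2 := hx.2; have h3 := hy.1; have h4 := hy.2
          linarith)
      t (Set.left_mem_Icc.2 (le_of_lt htu)) u (Set.right_mem_Icc.2 (le_of_lt htu))
    simpa using hkey
  -- |f μ - f u - fd 1 u * (μ - u)| ≤ M 2 * (μ - u)^2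
  have h2 : |f μ - f u - fd 1 u * (μ - u)| ≤ M 2 * (μ - u) ^ 2 := by
    have hkey := taylor_at_mu_left μ f fd m M hderiv hM hcont hf0 2 (by omega) hm2 u huμ
      (μ - u) (le_refl _)
    rw [Finset.sum_range_succ, Finset.sum_range_one] at hkey
    simp only [pow_zero, pow_one, Nat.factorial_zero, Nat.factorial_one, Nat.cast_one,
      mul_one, div_one, hf0] at hkey
    convert hkey using 2
    ring
  have hμu : (0 : ℝ) < μ - u := by linarith
  have h3 : |fd 1 u - slope f μ u| ≤ M 2 * (μ - u) := by
    have hse : slope f μ u = (f μ - f u) / (μ - u) := by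
      rw [slope_def_field, div_eq_div_iff (by linarith) (by linarith)]
      ring
    rw [hse]
    have heq : fd 1 u - (f μ - f u) / (μ - u)
        = -(f μ - f u - fd 1 u * (μ - u)) / (μ - u) := by
      field_simp
      ring
    rw [heq, abs_div, abs_neg, abs_of_pos hμu, div_le_iff₀ hμu]
    calc |f μ - f u - fd 1 u * (μ - u)| ≤ M 2 * (μ - u) ^ 2 := h2
      _ = M 2 * (μ - u) * (μ - u) := by ring
  calc |fd 1 t - dL|
      ≤ |fd 1 t - fd 1 u| + |fd 1 u - slope f μ u| + |slope f μ u - dL| := by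
        have := abs_sub_le (fd 1 t) (fd 1 u) dL
        have := abs_sub_le (fd 1 u) (slope f μ u) dL
        linarith [abs_sub_le (fd 1 t) (fd 1 u) dL, abs_sub_le (fd 1 u) (slope f μ u) dL]
    _ ≤ |dL - slope f μ u| + M 2 * (μ - u) + M 2 * (u - t) := by
        rw [abs_sub_comm (fd 1 t) (fd 1 u), abs_sub_comm (slope f μ u) dL]
        linarith [h1, h3]

lemma slope_right
    (hderiv : ∀ l : ℕ, l < m → ∀ x : ℝ, x ≠ μ → HasDerivAt (fd l) (fd (l + 1) x) x)
    (hM : ∀ l : ℕ, 1 ≤ l → l ≤ m → ∀ x : ℝ, x ≠ μ → |fd l x| ≤ M l)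
    (hcont : Continuous f) (hf0 : fd 0 = f) (hm2 : 2 ≤ m)
    (dR : ℝ) (hdR : HasDerivWithinAt f dR (Set.Ici μ) μ)
    (t : ℝ) (ht : μ < t) : |fd 1 t - dR| ≤ M 2 * (t - μ) := by
  have hslope : Tendsto (slope f μ) (𝓝[>] μ) (𝓝 dR) := by
    have h := hasDerivWithinAt_iff_tendsto_slope.1 hdR
    rwa [Set.Ici_sdiff_left] at h
  have hBlim : Tendsto (fun u : ℝ =>
      |dR - slope f μ u| + M 2 * (u - μ) + M 2 * (t - u)) (𝓝[>] μ)
      (𝓝 (M 2 * (t - μ))) := by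
    have h1 : Tendsto (fun u : ℝ => |dR - slope f μ u|) (𝓝[>] μ) (𝓝 0) := by
      have := (tendsto_const_nhds (x := dR) (f := 𝓝[>] μ)).sub hslope
      simpa using this.abs
    have h2 : Tendsto (fun u : ℝ => M 2 * (u - μ)) (𝓝[>] μ) (𝓝 0) := by
      have : Tendsto (fun u : ℝ => M 2 * (u - μ)) (𝓝 μ) (𝓝 (M 2 * (μ - μ))) := by
        apply Continuous.tendsto
        continuity
      simpa using this.mono_left nhdsWithin_le_nhds
    have h3 : Tendsto (fun u : ℝ => M 2 * (t - u)) (𝓝[>] μ) (𝓝 (M 2 * (t - μ))) := by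
      have : Tendsto (fun u : ℝ => M 2 * (t - u)) (𝓝 μ) (𝓝 (M 2 * (t - μ))) := by
        apply Continuous.tendsto
        continuity
      exact this.mono_left nhdsWithin_le_nhds
    simpa using (h1.add h2).add h3
  apply ge_of_tendsto hBlim
  filter_upwards [Ioo_mem_nhdsGT_of_mem (Set.mem_Ico.2 ⟨le_refl μ, ht⟩)] with u hu
  have hut : u < t := hu.2
  have hμu : μ < u := hu.1
  have h1 : |fd 1 u - fd 1 t| ≤ M 2 * (t - u) := by
    have hkey := chainTaylor μ fd m hderiv M hM 2 (by omega) hm2 1 1 rfl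
      (Set.Icc u t) (convex_Icc u t)
      (fun hmem => absurd hmem.1 (not_le.2 hμu)) (t - u)
      (fun x hx y hy => by
        rw [abs_sub_le_iff]
        constructor <;> [skip; skip] <;>
        · have h1 := hx.1; have h2 := hx.2; have h3 := hy.1; have h4 := hy.2
          linarith)
      t (Set.right_mem_Icc.2 (le_of_lt hut)) u (Set.left_mem_Icc.2 (le_of_lt hut))
    have : |fd 1 u - fd 1 t| = |fd 1 u - fd 1 t * (u - t) ^ 0 / 1| := by simp
    simpa using hkey
  have h2 : |f μ - f u - fd 1 u * (μ - u)| ≤ M 2 * (u - μ) ^ 2 := by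
    have hkey := taylor_at_mu_right μ f fd m M hderiv hM hcont hf0 2 (by omega) hm2 u hμu
      (u - μ) (le_refl _)
    rw [Finset.sum_range_succ, Finset.sum_range_one] at hkey
    simp only [pow_zero, pow_one, Nat.factorial_zero, Nat.factorial_one, Nat.cast_one,
      mul_one, div_one, hf0] at hkey
    calc |f μ - f u - fd 1 u * (μ - u)| = |f μ - (f u + fd 1 u * (μ - u))| := by ring_nf
      _ ≤ M 2 * (u - μ) ^ 2 := hkey
  have huμ2 : (0 : ℝ) < u - μ := by linarith
  have h3 : |fd 1 u - slope f μ u| ≤ M 2 * (u - μ) := by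
    have hse : slope f μ u = (f u - f μ) / (u - μ) := by
      rw [slope_def_field]
    rw [hse]
    have heq : fd 1 u - (f u - f μ) / (u - μ)
        = (f μ - f u - fd 1 u * (μ - u)) / (u - μ) := by
      field_simp
      ring
    rw [heq, abs_div, abs_of_pos huμ2, div_le_iff₀ huμ2]
    calc |f μ - f u - fd 1 u * (μ - u)| ≤ M 2 * (u - μ) ^ 2 := h2
      _ = M 2 * (u - μ) * (u - μ) := by ring
  calc |fd 1 t - dR|
      ≤ |fd 1 t - fd 1 u| + |fd 1 u - slope f μ u| + |slope f μ u - dR| := by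
        linarith [abs_sub_le (fd 1 t) (fd 1 u) dR, abs_sub_le (fd 1 u) (slope f μ u) dR]
    _ ≤ |dR - slope f μ u| + M 2 * (u - μ) + M 2 * (t - u) := by
        rw [abs_sub_comm (fd 1 t) (fd 1 u), abs_sub_comm (slope f μ u) dR]
        linarith [h1, h3]

lemma jump_left
    (hderiv : ∀ l : ℕ, l < m → ∀ x : ℝ, x ≠ μ → HasDerivAt (fd l) (fd (l + 1) x) x)
    (hM : ∀ l : ℕ, 1 ≤ l → l ≤ m → ∀ x : ℝ, x ≠ μ → |fd l x| ≤ M l)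
    (hcont : Continuous f) (hf0 : fd 0 = f) (hm2 : 2 ≤ m)
    (dL : ℝ) (hdL : HasDerivWithinAt f dL (Set.Iic μ) μ)
    (t : ℝ) (ht : t < μ) : |f t - f μ - dL * (t - μ)| ≤ 2 * M 2 * (μ - t) ^ 2 := by
  have h2 : |f μ - f t - fd 1 t * (μ - t)| ≤ M 2 * (μ - t) ^ 2 := by
    have hkey := taylor_at_mu_left μ f fd m M hderiv hM hcont hf0 2 (by omega) hm2 t ht
      (μ - t) (le_refl _)
    rw [Finset.sum_range_succ, Finset.sum_range_one] at hkey
    simp only [pow_zero, pow_one, Nat.factorial_zero, Nat.factorial_one, Nat.cast_one,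
      mul_one, div_one, hf0] at hkey
    calc |f μ - f t - fd 1 t * (μ - t)| = |f μ - (f t + fd 1 t * (μ - t))| := by ring_nf
      _ ≤ M 2 * (μ - t) ^ 2 := hkey
  have h1 := slope_left μ f fd m M hderiv hM hcont hf0 hm2 dL hdL t ht
  have heq : f t - f μ - dL * (t - μ)
      = -((f μ - f t - fd 1 t * (μ - t)) + (fd 1 t - dL) * (μ - t)) := by ring
  rw [heq, abs_neg]
  calc |(f μ - f t - fd 1 t * (μ - t)) + (fd 1 t - dL) * (μ - t)|
      ≤ |f μ - f t - fd 1 t * (μ - t)| + |(fd 1 t - dL) * (μ - t)| := abs_add_le _ _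
    _ ≤ M 2 * (μ - t) ^ 2 + M 2 * (μ - t) * (μ - t) := by
        rw [abs_mul, abs_of_pos (by linarith : (0:ℝ) < μ - t)]
        have := mul_le_mul_of_nonneg_right h1 (by linarith : (0:ℝ) ≤ μ - t)
        linarith [h2]
    _ = 2 * M 2 * (μ - t) ^ 2 := by ring

lemma jump_right
    (hderiv : ∀ l : ℕ, l < m → ∀ x : ℝ, x ≠ μ → HasDerivAt (fd l) (fd (l + 1) x) x)
    (hM : ∀ l : ℕ, 1 ≤ l → l ≤ m → ∀ x : ℝ, x ≠ μ → |fd l x| ≤ M l)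
    (hcont : Continuous f) (hf0 : fd 0 = f) (hm2 : 2 ≤ m)
    (dR : ℝ) (hdR : HasDerivWithinAt f dR (Set.Ici μ) μ)
    (t : ℝ) (ht : μ < t) : |f t - f μ - dR * (t - μ)| ≤ 2 * M 2 * (t - μ) ^ 2 := by
  have h2 : |f μ - f t - fd 1 t * (μ - t)| ≤ M 2 * (t - μ) ^ 2 := by
    have hkey := taylor_at_mu_right μ f fd m M hderiv hM hcont hf0 2 (by omega) hm2 t ht
      (t - μ) (le_refl _)
    rw [Finset.sum_range_succ, Finset.sum_range_one] at hkey
    simp only [pow_zero, pow_one, Nat.factorial_zero, Nat.factorial_one, Nat.cast_one,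
      mul_one, div_one, hf0] at hkey
    calc |f μ - f t - fd 1 t * (μ - t)| = |f μ - (f t + fd 1 t * (μ - t))| := by ring_nf
      _ ≤ M 2 * (t - μ) ^ 2 := hkey
  have h1 := slope_right μ f fd m M hderiv hM hcont hf0 hm2 dR hdR t ht
  have heq : f t - f μ - dR * (t - μ)
      = -((f μ - f t - fd 1 t * (μ - t)) + (fd 1 t - dR) * (μ - t)) := by ring
  rw [heq, abs_neg]
  calc |(f μ - f t - fd 1 t * (μ - t)) + (fd 1 t - dR) * (μ - t)|
      ≤ |f μ - f t - fd 1 t * (μ - t)| + |(fd 1 t - dR) * (μ - t)| := abs_add_le _ _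
    _ ≤ M 2 * (t - μ) ^ 2 + M 2 * (t - μ) * (t - μ) := by
        rw [abs_mul]
        have habs : |μ - t| = t - μ := by rw [abs_sub_comm]; exact abs_of_pos (by linarith)
        rw [habs]
        have := mul_le_mul_of_nonneg_right h1 (by linarith : (0:ℝ) ≤ t - μ)
        linarith [h2]
    _ = 2 * M 2 * (t - μ) ^ 2 := by ring

end OneSided


lemma grid_bounds (X : ℤ → ℝ) (hmin hmax : ℝ)
    (hlo : ∀ i : ℤ, hmin ≤ X i - X (i - 1)) (hhi : ∀ i : ℤ, X i - X (i - 1) ≤ hmax) :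
    ∀ p q : ℤ, p ≤ q →
      ((q - p : ℤ) : ℝ) * hmin ≤ X q - X p ∧ X q - X p ≤ ((q - p : ℤ) : ℝ) * hmax := by
  intro p q hpq
  obtain ⟨n, rfl⟩ : ∃ n : ℕ, q = p + (n : ℤ) := ⟨(q - p).toNat, by omega⟩
  clear hpq
  induction n with
  | zero => simp
  | succ n ih =>
    have h1 := hlo (p + (n : ℤ) + 1)
    have h2 := hhi (p + (n : ℤ) + 1)
    have he : p + (n : ℤ) + 1 - 1 = p + (n : ℤ) := by ring
    rw [he] at h1 h2
    have he2 : p + ((n : ℕ) + 1 : ℕ) = p + (n : ℤ) + 1 := by push_cast; ring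
    rw [he2]
    have hc1 : ((p + (n : ℤ) + 1 - p : ℤ) : ℝ) = (n : ℝ) + 1 := by push_cast; ring
    have hc2 : ((p + (n : ℤ) - p : ℤ) : ℝ) = (n : ℝ) := by push_cast; ring
    rw [hc1]
    rw [hc2] at ih
    constructor
    · have := ih.1; linarith
    · have := ih.2; linarith

lemma diam_Icc {lo hi d : ℝ} (h : hi - lo ≤ d) :
    ∀ x ∈ Set.Icc lo hi, ∀ y ∈ Set.Icc lo hi, |x - y| ≤ d := by
  intro x hx y hy
  rw [abs_sub_le_iff]
  constructor <;>
  · have := hx.1; have := hx.2; have := hy.1; have := hy.2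
    linarith

end St18

set_option maxHeartbeats 2000000 in
/-- Accuracy of the estimated singularity location: on a `σ` quasi-uniform grid with
`σ < 3/2`, for `f ∈ C^m(ℝ∖{μ})` with uniformly bounded derivatives up to order `m` and
`[f'] ≠ 0`, with `a = x_{ja} ≤ μ ≤ b = x_{jb}`, `b − a ≤ 2h` and
`min(μ − a, b − μ) > (3 − 2σ)h/(4σ²)`, there are constants `C > 0` and `0 < K < 1`,
depending only on `m` and `σ`, such that if `h < K·h_c` and `y ∈ [a,b]` is a zero of
`p⁺ − p⁻`, then `|μ − y| ≤ C h^m M_m / |[f']|`. -/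
theorem statement18 (m : ℕ) (hm : 2 ≤ m) (σ : ℝ) (hσ : σ < 3 / 2) :
    ∃ C : ℝ, 0 < C ∧ ∃ K : ℝ, 0 < K ∧ K < 1 ∧
    ∀ (X : ℤ → ℝ), StrictMono X →
    ∀ hmin hmax : ℝ, 0 < hmin →
      (∀ i : ℤ, hmin ≤ X i - X (i - 1)) →
      (∀ i : ℤ, X i - X (i - 1) ≤ hmax) →
      hmax / hmin ≤ σ →
    ∀ (f : ℝ → ℝ) (fd : ℕ → ℝ → ℝ) (μ : ℝ),
      Continuous f → fd 0 = f →
      (∀ l : ℕ, l < m → ∀ x : ℝ, x ≠ μ → HasDerivAt (fd l) (fd (l + 1) x) x) →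
      ContinuousOn (fd m) {μ}ᶜ →
    ∀ M : ℕ → ℝ,
      (∀ l : ℕ, 1 ≤ l → l ≤ m → ∀ x : ℝ, x ≠ μ → |fd l x| ≤ M l) →
    ∀ dL dR : ℝ,
      HasDerivWithinAt f dL (Set.Iic μ) μ →
      HasDerivWithinAt f dR (Set.Ici μ) μ →
      dR - dL ≠ 0 →
    ∀ ja jb : ℤ, X ja ≤ μ → μ ≤ X jb → X jb - X ja ≤ 2 * hmax →
      min (μ - X ja) (X jb - μ) > (3 - 2 * σ) * hmax / (4 * σ ^ 2) →
    ∀ pm pp : Polynomial ℝ, pm.degree < m → pp.degree < m →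
      (∀ n : ℕ, n < m → pm.eval (X (ja - (n : ℤ))) = f (X (ja - (n : ℤ)))) →
      (∀ n : ℕ, n < m → pp.eval (X (jb + (n : ℤ))) = f (X (jb + (n : ℤ)))) →
      hmax < K * (|dR - dL| / (4 * M 2)) →
    ∀ y ∈ Set.Icc (X ja) (X jb), pp.eval y = pm.eval y →
      |μ - y| ≤ C * hmax ^ m * M m / |dR - dL| := by
  classical
  have hm1 : (1 : ℝ) ≤ (m : ℝ) := by exact_mod_cast Nat.one_le_of_lt hm
  set σ' : ℝ := max σ 1 with hσ'def
  have hσ'1 : (1 : ℝ) ≤ σ' := le_max_right _ _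
  have hσ'pos : (0 : ℝ) < σ' := lt_of_lt_of_le one_pos hσ'1
  set ρ₀ : ℝ := ((m : ℝ) + 1) * σ' with hρ₀def
  have hρ₀1 : (1 : ℝ) ≤ ρ₀ := by nlinarith
  have hρ₀pos : (0 : ℝ) < ρ₀ := lt_of_lt_of_le one_pos hρ₀1
  set Λ : ℝ := (m : ℝ) * ρ₀ ^ m with hΛdef
  have hΛpos : 0 < Λ := by
    apply mul_pos (by linarith) (pow_pos hρ₀pos m)
  set c₄ : ℝ := 2 * (m : ℝ) ^ 2 * ρ₀ ^ m * ((m : ℝ) + 1) ^ 2 * σ' with hc₄def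
  have hc₄pos : 0 < c₄ := by
    apply mul_pos _ hσ'pos
    apply mul_pos _ (by positivity)
    apply mul_pos (by positivity) (pow_pos hρ₀pos m)
  refine ⟨4 * (Λ + 1) * ((m : ℝ) + 1) ^ m, by positivity, 1 / (2 * c₄ + 2), by positivity,
    ?_, ?_⟩
  · rw [div_lt_one (by linarith)]
    linarith
  intro X hXmono hmin hmax hminpos hlo hhi hratio f fd μ hfc hf0 hderiv _hfm M hMb dL dR hdL
    hdR hjump ja jb haμ hμb hba hgeo pm pp hpmdeg hppdeg hpmval hppval hK y hy hzero
  have hminmax : hmin ≤ hmax := le_trans (hlo ja) (hhi ja)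
  have hmaxpos : 0 < hmax := lt_of_lt_of_le hminpos hminmax
  have hmh : hmax ≤ (m : ℝ) * hmax := by
    have := mul_le_mul_of_nonneg_right hm1 hmaxpos.le
    linarith
  have hm1h : (m : ℝ) * hmax + hmax = ((m : ℝ) + 1) * hmax := by ring
  have hσ1 : (1 : ℝ) ≤ σ := le_trans ((one_le_div hminpos).2 hminmax) hratio
  have hσσ' : σ ≤ σ' := le_max_left _ _
  have hσpos : (0 : ℝ) < σ := lt_of_lt_of_le one_pos hσ1
  -- strict inequalities a < μ < b
  have hgeopos : 0 < (3 - 2 * σ) * hmax / (4 * σ ^ 2) := by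
    apply div_pos (mul_pos (by linarith) hmaxpos) (by positivity)
  have hgeo' := lt_min_iff.1 hgeo
  have haμ' : X ja < μ := by have := hgeo'.1; linarith
  have hμb' : μ < X jb := by have := hgeo'.2; linarith
  -- basic positivity
  have hMm0 : 0 ≤ M m :=
    le_trans (abs_nonneg _) (hMb m (by omega) le_rfl (X ja) (ne_of_lt haμ'))
  have hM20 : 0 ≤ M 2 :=
    le_trans (abs_nonneg _) (hMb 2 (by omega) hm (X ja) (ne_of_lt haμ'))
  have hJpos : 0 < |dR - dL| := abs_pos.2 hjump
  have hM2pos : 0 < M 2 := by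
    rcases hM20.lt_or_eq with h | h
    · exact h
    · exfalso
      rw [← h] at hK
      simp only [mul_zero, div_zero] at hK
      linarith
  have hgb := St18.grid_bounds X hmin hmax hlo hhi
  -- window radius
  have hδR : hmin ≤ ((m : ℝ) + 1) * hmax := by linarith
  have hρ : ((m : ℝ) + 1) * hmax / hmin ≤ ρ₀ := by
    rw [mul_div_assoc]
    calc ((m : ℝ) + 1) * (hmax / hmin) ≤ ((m : ℝ) + 1) * σ := by
          apply mul_le_mul_of_nonneg_left hratio (by linarith)
      _ ≤ ρ₀ := by rw [hρ₀def]; apply mul_le_mul_of_nonneg_left hσσ' (by linarith)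
  have hρm : (((m : ℝ) + 1) * hmax / hmin) ^ m ≤ ρ₀ ^ m :=
    pow_le_pow_left₀ (by positivity) hρ m
  -- nodes
  have hvLle : ∀ n : ℕ, X (ja - (n : ℤ)) ≤ X ja := by
    intro n
    exact hXmono.monotone (by omega)
  have hvRge : ∀ n : ℕ, X jb ≤ X (jb + (n : ℤ)) := by
    intro n
    exact hXmono.monotone (by omega)
  have hvLwin : ∀ n : ℕ, n < m → X ja - X (ja - (n : ℤ)) ≤ ((m : ℝ) - 1) * hmax := by
    intro n hn
    have h := (hgb (ja - (n : ℤ)) ja (by omega)).2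
    have hc : ((ja - (ja - (n : ℤ)) : ℤ) : ℝ) = (n : ℝ) := by push_cast; ring
    rw [hc] at h
    calc X ja - X (ja - (n : ℤ)) ≤ (n : ℝ) * hmax := h
      _ ≤ ((m : ℝ) - 1) * hmax := by
          apply mul_le_mul_of_nonneg_right _ hmaxpos.le
          have : (n : ℝ) + 1 ≤ (m : ℝ) := by exact_mod_cast hn
          linarith
  have hvRwin : ∀ n : ℕ, n < m → X (jb + (n : ℤ)) - X jb ≤ ((m : ℝ) - 1) * hmax := by
    intro n hn
    have h := (hgb jb (jb + (n : ℤ)) (by omega)).2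
    have hc : ((jb + (n : ℤ) - jb : ℤ) : ℝ) = (n : ℝ) := by push_cast; ring
    rw [hc] at h
    calc X (jb + (n : ℤ)) - X jb ≤ (n : ℝ) * hmax := h
      _ ≤ ((m : ℝ) - 1) * hmax := by
          apply mul_le_mul_of_nonneg_right _ hmaxpos.le
          have : (n : ℝ) + 1 ≤ (m : ℝ) := by exact_mod_cast hn
          linarith
  -- separation
  have hsepL : ∀ i ∈ Finset.range m, ∀ j ∈ Finset.range m, i ≠ j → hmin ≤ |X (ja - (i : ℤ)) - X (ja - (j : ℤ))| := by
    have key : ∀ i j : ℕ, i < j → hmin ≤ X (ja - (i : ℤ)) - X (ja - (j : ℤ)) := by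
      intro i j hij
      have h := (hgb (ja - (j : ℤ)) (ja - (i : ℤ)) (by omega)).1
      have hc : ((ja - (i : ℤ) - (ja - (j : ℤ)) : ℤ) : ℝ) = (j : ℝ) - (i : ℝ) := by
        push_cast; ring
      rw [hc] at h
      have hji : (1 : ℝ) ≤ (j : ℝ) - (i : ℝ) := by
        have : (i : ℝ) + 1 ≤ (j : ℝ) := by exact_mod_cast hij
        linarith
      have h2 : (1 : ℝ) * hmin ≤ ((j : ℝ) - (i : ℝ)) * hmin :=
        mul_le_mul_of_nonneg_right hji hminpos.le
      linarith
    intro i _ j _ hij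
    rcases lt_or_gt_of_ne hij with h | h
    · exact le_trans (key i j h) (le_abs_self _)
    · rw [abs_sub_comm]
      exact le_trans (key j i h) (le_abs_self _)
  have hsepR : ∀ i ∈ Finset.range m, ∀ j ∈ Finset.range m, i ≠ j → hmin ≤ |X (jb + (i : ℤ)) - X (jb + (j : ℤ))| := by
    have key : ∀ i j : ℕ, i < j → hmin ≤ X (jb + (j : ℤ)) - X (jb + (i : ℤ)) := by
      intro i j hij
      have h := (hgb (jb + (i : ℤ)) (jb + (j : ℤ)) (by omega)).1
      have hc : ((jb + (j : ℤ) - (jb + (i : ℤ)) : ℤ) : ℝ) = (j : ℝ) - (i : ℝ) := by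
        push_cast; ring
      rw [hc] at h
      have hji : (1 : ℝ) ≤ (j : ℝ) - (i : ℝ) := by
        have : (i : ℝ) + 1 ≤ (j : ℝ) := by exact_mod_cast hij
        linarith
      have h2 : (1 : ℝ) * hmin ≤ ((j : ℝ) - (i : ℝ)) * hmin :=
        mul_le_mul_of_nonneg_right hji hminpos.le
      linarith
    intro i _ j _ hij
    rcases lt_or_gt_of_ne hij with h | h
    · rw [abs_sub_comm]
      exact le_trans (key i j h) (le_abs_self _)
    · exact le_trans (key j i h) (le_abs_self _)
  -- evaluation point windows
  have hxL : ∀ x : ℝ, X ja ≤ x → x ≤ X jb →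
      ∀ j ∈ Finset.range m, |x - X (ja - (j : ℤ))| ≤ ((m : ℝ) + 1) * hmax := by
    intro x hx1 hx2 j hj
    have h1 := hvLle j
    have h2 := hvLwin j (Finset.mem_range.1 hj)
    rw [abs_of_nonneg (by linarith)]
    have : x - X ja ≤ 2 * hmax := by linarith
    linarith
  have hxR : ∀ x : ℝ, X ja ≤ x → x ≤ X jb →
      ∀ j ∈ Finset.range m, |x - X (jb + (j : ℤ))| ≤ ((m : ℝ) + 1) * hmax := by
    intro x hx1 hx2 j hj
    have h1 := hvRge j
    have h2 := hvRwin j (Finset.mem_range.1 hj)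
    rw [abs_sub_comm, abs_of_nonneg (by linarith)]
    have : X jb - x ≤ 2 * hmax := by linarith
    linarith
  -- Taylor polynomials
  set TL : Polynomial ℝ := ∑ k ∈ Finset.range m,
      Polynomial.C (fd k (X ja) / (k.factorial : ℝ)) * (Polynomial.X - Polynomial.C (X ja)) ^ k
      with hTLdef
  set TR : Polynomial ℝ := ∑ k ∈ Finset.range m,
      Polynomial.C (fd k (X jb) / (k.factorial : ℝ)) * (Polynomial.X - Polynomial.C (X jb)) ^ k
      with hTRdef
  have hdegT : ∀ c : ℝ, (∑ k ∈ Finset.range m,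
      Polynomial.C (fd k c / (k.factorial : ℝ)) * (Polynomial.X - Polynomial.C c) ^ k).degree
        < (m : WithBot ℕ) := by
    intro c
    apply lt_of_le_of_lt (Polynomial.degree_sum_le _ _)
    rw [Finset.sup_lt_iff (by exact_mod_cast (WithBot.bot_lt_coe m))]
    intro k hk
    have h2 : ((Polynomial.X - Polynomial.C c) ^ k).degree = (k : WithBot ℕ) := by
      rw [Polynomial.degree_pow, Polynomial.degree_X_sub_C, nsmul_eq_mul, mul_one]
    calc (Polynomial.C (fd k c / (k.factorial : ℝ)) * (Polynomial.X - Polynomial.C c) ^ k).degree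
        ≤ (Polynomial.C (fd k c / (k.factorial : ℝ))).degree
          + ((Polynomial.X - Polynomial.C c) ^ k).degree := Polynomial.degree_mul_le _ _
      _ ≤ 0 + (k : WithBot ℕ) := by
          rw [h2]; exact add_le_add Polynomial.degree_C_le le_rfl
      _ = (k : WithBot ℕ) := zero_add _
      _ < (m : WithBot ℕ) := by exact_mod_cast Finset.mem_range.1 hk
  have hTeval : ∀ (c t : ℝ), (∑ k ∈ Finset.range m,
      Polynomial.C (fd k c / (k.factorial : ℝ)) * (Polynomial.X - Polynomial.C c) ^ k).eval t
        = ∑ k ∈ Finset.range m, fd k c * (t - c) ^ k / (k.factorial : ℝ) := by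
    intro c t
    rw [Polynomial.eval_finset_sum]
    apply Finset.sum_congr rfl
    intro k _
    simp only [Polynomial.eval_mul, Polynomial.eval_C, Polynomial.eval_pow, Polynomial.eval_sub,
      Polynomial.eval_X]
    ring
  have hdegTL : TL.degree < (m : WithBot ℕ) := by rw [hTLdef]; exact hdegT (X ja)
  have hdegTR : TR.degree < (m : WithBot ℕ) := by rw [hTRdef]; exact hdegT (X jb)
  -- value bounds at nodes (left)
  have hTnodeL : ∀ n ∈ Finset.range m,
      |f (X (ja - (n : ℤ))) - TL.eval (X (ja - (n : ℤ)))| ≤ M m * (((m : ℝ) + 1) * hmax) ^ m := by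
    intro n hn
    have hn' : n < m := Finset.mem_range.1 hn
    have hdiam : X ja - X (ja - (m : ℤ)) ≤ ((m : ℝ) + 1) * hmax := by
      have h := (hgb (ja - (m : ℤ)) ja (by omega)).2
      have hc : ((ja - (ja - (m : ℤ)) : ℤ) : ℝ) = (m : ℝ) := by push_cast; ring
      rw [hc] at h
      linarith
    have hkey := St18.chainTaylor μ fd m hderiv M hMb m (by omega) le_rfl m 0 (by omega)
      (Set.Icc (X (ja - (m : ℤ))) (X ja)) (convex_Icc _ _)
      (fun hmem => absurd hmem.2 (not_le.2 haμ')) (((m : ℝ) + 1) * hmax)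
      (St18.diam_Icc hdiam)
      (X ja) (Set.right_mem_Icc.2 (hXmono.monotone (by omega)))
      (X (ja - (n : ℤ))) (Set.mem_Icc.2 ⟨hXmono.monotone (by omega), hvLle n⟩)
    simp only [zero_add] at hkey
    rw [hf0] at hkey
    rw [hTLdef, hTeval]
    exact hkey
  have hTnodeR : ∀ n ∈ Finset.range m,
      |f (X (jb + (n : ℤ))) - TR.eval (X (jb + (n : ℤ)))| ≤ M m * (((m : ℝ) + 1) * hmax) ^ m := by
    intro n hn
    have hn' : n < m := Finset.mem_range.1 hn
    have hdiam : X (jb + (m : ℤ)) - X jb ≤ ((m : ℝ) + 1) * hmax := by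
      have h := (hgb jb (jb + (m : ℤ)) (by omega)).2
      have hc : ((jb + (m : ℤ) - jb : ℤ) : ℝ) = (m : ℝ) := by push_cast; ring
      rw [hc] at h
      linarith
    have hkey := St18.chainTaylor μ fd m hderiv M hMb m (by omega) le_rfl m 0 (by omega)
      (Set.Icc (X jb) (X (jb + (m : ℤ)))) (convex_Icc _ _)
      (fun hmem => absurd hmem.1 (not_le.2 hμb')) (((m : ℝ) + 1) * hmax)
      (St18.diam_Icc hdiam)
      (X jb) (Set.left_mem_Icc.2 (hXmono.monotone (by omega)))
      (X (jb + (n : ℤ))) (Set.mem_Icc.2 ⟨hvRge n, hXmono.monotone (by omega)⟩)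
    simp only [zero_add] at hkey
    rw [hf0] at hkey
    rw [hTRdef, hTeval]
    exact hkey
  -- Taylor bound at μ
  have hTμL : |f μ - TL.eval μ| ≤ M m * (((m : ℝ) + 1) * hmax) ^ m := by
    have hkey := St18.taylor_at_mu_left μ f fd m M hderiv hMb hfc hf0 m (by omega) le_rfl
      (X ja) haμ' (((m : ℝ) + 1) * hmax) (by linarith)
    rw [hTLdef, hTeval]
    exact hkey
  have hTμR : |f μ - TR.eval μ| ≤ M m * (((m : ℝ) + 1) * hmax) ^ m := by
    have hkey := St18.taylor_at_mu_right μ f fd m M hderiv hMb hfc hf0 m (by omega) le_rfl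
      (X jb) hμb' (((m : ℝ) + 1) * hmax) (by linarith)
    rw [hTRdef, hTeval]
    exact hkey
  -- interpolation value error at μ (left)
  have hμmem1 : X ja ≤ μ := haμ
  have hμmem2 : μ ≤ X jb := hμb
  have hMRm0 : 0 ≤ M m * (((m : ℝ) + 1) * hmax) ^ m := by positivity
  have hpmμ : |pm.eval μ - f μ| ≤ (Λ + 1) * (M m * (((m : ℝ) + 1) * hmax) ^ m) := by
    have hdeg : (pm - TL).degree < (m : WithBot ℕ) :=
      lt_of_le_of_lt (Polynomial.degree_sub_le _ _) (max_lt hpmdeg hdegTL)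
    have hB : ∀ i ∈ Finset.range m,
        |(pm - TL).eval (X (ja - (i : ℤ)))| ≤ M m * (((m : ℝ) + 1) * hmax) ^ m := by
      intro i hi
      rw [Polynomial.eval_sub, hpmval i (Finset.mem_range.1 hi)]
      exact hTnodeL i hi
    have h1 := (St18.interp_bounds m (by omega) (fun n : ℕ => X (ja - (n : ℤ))) (pm - TL) hdeg hmin (((m : ℝ) + 1) * hmax)
      hminpos hδR hsepL (M m * (((m : ℝ) + 1) * hmax) ^ m) hB μ (hxL μ hμmem1 hμmem2)).1
    have h2 : |(pm - TL).eval μ| ≤ Λ * (M m * (((m : ℝ) + 1) * hmax) ^ m) := by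
      calc |(pm - TL).eval μ|
          ≤ (m : ℝ) * (((m : ℝ) + 1) * hmax / hmin) ^ m
            * (M m * (((m : ℝ) + 1) * hmax) ^ m) := h1
        _ ≤ (m : ℝ) * ρ₀ ^ m * (M m * (((m : ℝ) + 1) * hmax) ^ m) := by
            apply mul_le_mul_of_nonneg_right _ hMRm0
            exact mul_le_mul_of_nonneg_left hρm (by positivity)
        _ = Λ * (M m * (((m : ℝ) + 1) * hmax) ^ m) := by rw [hΛdef]
    rw [Polynomial.eval_sub] at h2
    calc |pm.eval μ - f μ| ≤ |pm.eval μ - TL.eval μ| + |f μ - TL.eval μ| := by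
          calc |pm.eval μ - f μ| = |(pm.eval μ - TL.eval μ) - (f μ - TL.eval μ)| := by ring_nf
            _ ≤ |pm.eval μ - TL.eval μ| + |f μ - TL.eval μ| := abs_sub _ _
      _ ≤ Λ * (M m * (((m : ℝ) + 1) * hmax) ^ m) + M m * (((m : ℝ) + 1) * hmax) ^ m := by
          linarith [h2, hTμL]
      _ = (Λ + 1) * (M m * (((m : ℝ) + 1) * hmax) ^ m) := by ring
  have hppμ : |pp.eval μ - f μ| ≤ (Λ + 1) * (M m * (((m : ℝ) + 1) * hmax) ^ m) := by
    have hdeg : (pp - TR).degree < (m : WithBot ℕ) :=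
      lt_of_le_of_lt (Polynomial.degree_sub_le _ _) (max_lt hppdeg hdegTR)
    have hB : ∀ i ∈ Finset.range m,
        |(pp - TR).eval (X (jb + (i : ℤ)))| ≤ M m * (((m : ℝ) + 1) * hmax) ^ m := by
      intro i hi
      rw [Polynomial.eval_sub, hppval i (Finset.mem_range.1 hi)]
      exact hTnodeR i hi
    have h1 := (St18.interp_bounds m (by omega) (fun n : ℕ => X (jb + (n : ℤ))) (pp - TR) hdeg hmin (((m : ℝ) + 1) * hmax)
      hminpos hδR hsepR (M m * (((m : ℝ) + 1) * hmax) ^ m) hB μ (hxR μ hμmem1 hμmem2)).1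
    have h2 : |(pp - TR).eval μ| ≤ Λ * (M m * (((m : ℝ) + 1) * hmax) ^ m) := by
      calc |(pp - TR).eval μ|
          ≤ (m : ℝ) * (((m : ℝ) + 1) * hmax / hmin) ^ m
            * (M m * (((m : ℝ) + 1) * hmax) ^ m) := h1
        _ ≤ (m : ℝ) * ρ₀ ^ m * (M m * (((m : ℝ) + 1) * hmax) ^ m) := by
            apply mul_le_mul_of_nonneg_right _ hMRm0
            exact mul_le_mul_of_nonneg_left hρm (by positivity)
        _ = Λ * (M m * (((m : ℝ) + 1) * hmax) ^ m) := by rw [hΛdef]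
    rw [Polynomial.eval_sub] at h2
    calc |pp.eval μ - f μ| ≤ |pp.eval μ - TR.eval μ| + |f μ - TR.eval μ| := by
          calc |pp.eval μ - f μ| = |(pp.eval μ - TR.eval μ) - (f μ - TR.eval μ)| := by ring_nf
            _ ≤ |pp.eval μ - TR.eval μ| + |f μ - TR.eval μ| := abs_sub _ _
      _ ≤ Λ * (M m * (((m : ℝ) + 1) * hmax) ^ m) + M m * (((m : ℝ) + 1) * hmax) ^ m := by
          linarith [h2, hTμR]
      _ = (Λ + 1) * (M m * (((m : ℝ) + 1) * hmax) ^ m) := by ring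
  -- bound on G(μ)
  have hGμ : |(pp - pm).eval μ| ≤ 2 * (Λ + 1) * (M m * (((m : ℝ) + 1) * hmax) ^ m) := by
    rw [Polynomial.eval_sub]
    calc |pp.eval μ - pm.eval μ| = |(pp.eval μ - f μ) - (pm.eval μ - f μ)| := by ring_nf
      _ ≤ |pp.eval μ - f μ| + |pm.eval μ - f μ| := abs_sub _ _
      _ ≤ 2 * (Λ + 1) * (M m * (((m : ℝ) + 1) * hmax) ^ m) := by linarith [hpmμ, hppμ]
  -- derivative bounds
  have hderivL : ∀ ξ : ℝ, X ja ≤ ξ → ξ ≤ X jb →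
      |(Polynomial.derivative pm).eval ξ - dL| ≤ c₄ * M 2 * hmax := by
    intro ξ hξ1 hξ2
    set LL : Polynomial ℝ := Polynomial.C (f μ)
        + Polynomial.C dL * (Polynomial.X - Polynomial.C μ) with hLLdef
    have hLLeval : ∀ t : ℝ, LL.eval t = f μ + dL * (t - μ) := by
      intro t; rw [hLLdef]; simp
    have hLLderiv : Polynomial.derivative LL = Polynomial.C dL := by
      rw [hLLdef]
      simp [Polynomial.derivative_C_mul]
    have hdegLL : LL.degree < (m : WithBot ℕ) := by
      rw [hLLdef]
      apply lt_of_le_of_lt (Polynomial.degree_add_le _ _)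
      apply max_lt
      · exact lt_of_le_of_lt Polynomial.degree_C_le
          (by exact_mod_cast (show 0 < m by omega))
      · calc (Polynomial.C dL * (Polynomial.X - Polynomial.C μ)).degree
            ≤ (Polynomial.C dL).degree + (Polynomial.X - Polynomial.C μ).degree :=
              Polynomial.degree_mul_le _ _
          _ ≤ 0 + 1 := add_le_add Polynomial.degree_C_le
              (le_of_eq (Polynomial.degree_X_sub_C _))
          _ = 1 := zero_add _
          _ < (m : WithBot ℕ) := by exact_mod_cast (show 1 < m by omega)
    have hdeg : (pm - LL).degree < (m : WithBot ℕ) :=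
      lt_of_le_of_lt (Polynomial.degree_sub_le _ _) (max_lt hpmdeg hdegLL)
    have hB : ∀ i ∈ Finset.range m,
        |(pm - LL).eval (X (ja - (i : ℤ)))| ≤ 2 * M 2 * (((m : ℝ) + 1) * hmax) ^ 2 := by
      intro i hi
      rw [Polynomial.eval_sub, hpmval i (Finset.mem_range.1 hi), hLLeval]
      have hlt : X (ja - (i : ℤ)) < μ := lt_of_le_of_lt (hvLle i) haμ'
      have hj := St18.jump_left μ f fd m M hderiv hMb hfc hf0 hm dL hdL (X (ja - (i : ℤ))) hlt
      have hμt : μ - X (ja - (i : ℤ)) ≤ ((m : ℝ) + 1) * hmax := by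
        have h1 := hvLwin i (Finset.mem_range.1 hi)
        have : μ - X ja ≤ 2 * hmax := by linarith
        linarith
      calc |f (X (ja - (i : ℤ))) - (f μ + dL * (X (ja - (i : ℤ)) - μ))|
          = |f (X (ja - (i : ℤ))) - f μ - dL * (X (ja - (i : ℤ)) - μ)| := by ring_nf
        _ ≤ 2 * M 2 * (μ - X (ja - (i : ℤ))) ^ 2 := hj
        _ ≤ 2 * M 2 * (((m : ℝ) + 1) * hmax) ^ 2 := by
            apply mul_le_mul_of_nonneg_left _ (by linarith)
            apply pow_le_pow_left₀ (by linarith) hμt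
    have h2 := (St18.interp_bounds m (by omega) (fun n : ℕ => X (ja - (n : ℤ))) (pm - LL) hdeg hmin (((m : ℝ) + 1) * hmax)
      hminpos hδR hsepL (2 * M 2 * (((m : ℝ) + 1) * hmax) ^ 2) hB ξ (hxL ξ hξ1 hξ2)).2
    rw [Polynomial.derivative_sub, hLLderiv] at h2
    rw [Polynomial.eval_sub, Polynomial.eval_C] at h2
    calc |(Polynomial.derivative pm).eval ξ - dL|
        ≤ (m : ℝ) * (m : ℝ) * (((m : ℝ) + 1) * hmax / hmin) ^ m
          * (2 * M 2 * (((m : ℝ) + 1) * hmax) ^ 2) / hmin := h2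
      _ ≤ (m : ℝ) * (m : ℝ) * ρ₀ ^ m
          * (2 * M 2 * (((m : ℝ) + 1) * hmax) ^ 2) / hmin := by
          apply (div_le_div_iff_of_pos_right hminpos).2
          apply mul_le_mul_of_nonneg_right
          · exact mul_le_mul_of_nonneg_left hρm (by positivity)
          · apply mul_nonneg (mul_nonneg (by norm_num) hM20) (by positivity)
      _ = 2 * (m : ℝ) ^ 2 * ρ₀ ^ m * ((m : ℝ) + 1) ^ 2 * M 2 * hmax * (hmax / hmin) := by
          field_simp
      _ ≤ 2 * (m : ℝ) ^ 2 * ρ₀ ^ m * ((m : ℝ) + 1) ^ 2 * M 2 * hmax * σ' := by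
          apply mul_le_mul_of_nonneg_left (le_trans hratio hσσ')
          apply mul_nonneg _ hmaxpos.le
          apply mul_nonneg _ hM20
          positivity
      _ = c₄ * M 2 * hmax := by rw [hc₄def]; ring
  have hderivR : ∀ ξ : ℝ, X ja ≤ ξ → ξ ≤ X jb →
      |(Polynomial.derivative pp).eval ξ - dR| ≤ c₄ * M 2 * hmax := by
    intro ξ hξ1 hξ2
    set LR : Polynomial ℝ := Polynomial.C (f μ)
        + Polynomial.C dR * (Polynomial.X - Polynomial.C μ) with hLRdef
    have hLReval : ∀ t : ℝ, LR.eval t = f μ + dR * (t - μ) := by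
      intro t; rw [hLRdef]; simp
    have hLRderiv : Polynomial.derivative LR = Polynomial.C dR := by
      rw [hLRdef]
      simp [Polynomial.derivative_C_mul]
    have hdegLR : LR.degree < (m : WithBot ℕ) := by
      rw [hLRdef]
      apply lt_of_le_of_lt (Polynomial.degree_add_le _ _)
      apply max_lt
      · exact lt_of_le_of_lt Polynomial.degree_C_le
          (by exact_mod_cast (show 0 < m by omega))
      · calc (Polynomial.C dR * (Polynomial.X - Polynomial.C μ)).degree
            ≤ (Polynomial.C dR).degree + (Polynomial.X - Polynomial.C μ).degree :=
              Polynomial.degree_mul_le _ _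
          _ ≤ 0 + 1 := add_le_add Polynomial.degree_C_le
              (le_of_eq (Polynomial.degree_X_sub_C _))
          _ = 1 := zero_add _
          _ < (m : WithBot ℕ) := by exact_mod_cast (show 1 < m by omega)
    have hdeg : (pp - LR).degree < (m : WithBot ℕ) :=
      lt_of_le_of_lt (Polynomial.degree_sub_le _ _) (max_lt hppdeg hdegLR)
    have hB : ∀ i ∈ Finset.range m,
        |(pp - LR).eval (X (jb + (i : ℤ)))| ≤ 2 * M 2 * (((m : ℝ) + 1) * hmax) ^ 2 := by
      intro i hi
      rw [Polynomial.eval_sub, hppval i (Finset.mem_range.1 hi), hLReval]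
      have hlt : μ < X (jb + (i : ℤ)) := lt_of_lt_of_le hμb' (hvRge i)
      have hj := St18.jump_right μ f fd m M hderiv hMb hfc hf0 hm dR hdR (X (jb + (i : ℤ))) hlt
      have hμt : X (jb + (i : ℤ)) - μ ≤ ((m : ℝ) + 1) * hmax := by
        have h1 := hvRwin i (Finset.mem_range.1 hi)
        have : X jb - μ ≤ 2 * hmax := by linarith
        linarith
      calc |f (X (jb + (i : ℤ))) - (f μ + dR * (X (jb + (i : ℤ)) - μ))|
          = |f (X (jb + (i : ℤ))) - f μ - dR * (X (jb + (i : ℤ)) - μ)| := by ring_nf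
        _ ≤ 2 * M 2 * (X (jb + (i : ℤ)) - μ) ^ 2 := hj
        _ ≤ 2 * M 2 * (((m : ℝ) + 1) * hmax) ^ 2 := by
            apply mul_le_mul_of_nonneg_left _ (by linarith)
            apply pow_le_pow_left₀ (by linarith) hμt
    have h2 := (St18.interp_bounds m (by omega) (fun n : ℕ => X (jb + (n : ℤ))) (pp - LR) hdeg hmin (((m : ℝ) + 1) * hmax)
      hminpos hδR hsepR (2 * M 2 * (((m : ℝ) + 1) * hmax) ^ 2) hB ξ (hxR ξ hξ1 hξ2)).2
    rw [Polynomial.derivative_sub, hLRderiv] at h2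
    rw [Polynomial.eval_sub, Polynomial.eval_C] at h2
    calc |(Polynomial.derivative pp).eval ξ - dR|
        ≤ (m : ℝ) * (m : ℝ) * (((m : ℝ) + 1) * hmax / hmin) ^ m
          * (2 * M 2 * (((m : ℝ) + 1) * hmax) ^ 2) / hmin := h2
      _ ≤ (m : ℝ) * (m : ℝ) * ρ₀ ^ m
          * (2 * M 2 * (((m : ℝ) + 1) * hmax) ^ 2) / hmin := by
          apply (div_le_div_iff_of_pos_right hminpos).2
          apply mul_le_mul_of_nonneg_right
          · exact mul_le_mul_of_nonneg_left hρm (by positivity)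
          · apply mul_nonneg (mul_nonneg (by norm_num) hM20) (by positivity)
      _ = 2 * (m : ℝ) ^ 2 * ρ₀ ^ m * ((m : ℝ) + 1) ^ 2 * M 2 * hmax * (hmax / hmin) := by
          field_simp
      _ ≤ 2 * (m : ℝ) ^ 2 * ρ₀ ^ m * ((m : ℝ) + 1) ^ 2 * M 2 * hmax * σ' := by
          apply mul_le_mul_of_nonneg_left (le_trans hratio hσσ')
          apply mul_nonneg _ hmaxpos.le
          apply mul_nonneg _ hM20
          positivity
      _ = c₄ * M 2 * hmax := by rw [hc₄def]; ring
  -- smallness of the derivative perturbation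
  have hsmall : c₄ * M 2 * hmax ≤ |dR - dL| / 4 := by
    have h1 : c₄ * M 2 * hmax ≤ c₄ * M 2 * (1 / (2 * c₄ + 2) * (|dR - dL| / (4 * M 2))) := by
      apply mul_le_mul_of_nonneg_left hK.le
      exact mul_nonneg hc₄pos.le hM20
    have h2 : c₄ * M 2 * (1 / (2 * c₄ + 2) * (|dR - dL| / (4 * M 2)))
        = c₄ / (2 * c₄ + 2) * (|dR - dL| / 4) := by
      field_simp
    have h3 : c₄ / (2 * c₄ + 2) ≤ 1 := by
      rw [div_le_one (by linarith)]
      linarith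
    have h4 : c₄ / (2 * c₄ + 2) * (|dR - dL| / 4) ≤ 1 * (|dR - dL| / 4) :=
      mul_le_mul_of_nonneg_right h3 (by positivity)
    rw [h2] at h1
    linarith
  -- derivative of p⁺ - p⁻ bounded below
  have hGd : ∀ ξ : ℝ, X ja ≤ ξ → ξ ≤ X jb →
      |dR - dL| / 2 ≤ |(Polynomial.derivative (pp - pm)).eval ξ| := by
    intro ξ h1 h2
    have hL := hderivL ξ h1 h2
    have hR := hderivR ξ h1 h2
    have heq : dR - dL = (Polynomial.derivative (pp - pm)).eval ξ
        - (((Polynomial.derivative pp).eval ξ - dR)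
          - ((Polynomial.derivative pm).eval ξ - dL)) := by
      rw [Polynomial.derivative_sub, Polynomial.eval_sub]
      ring
    have htr : |dR - dL| ≤ |(Polynomial.derivative (pp - pm)).eval ξ|
        + (|(Polynomial.derivative pp).eval ξ - dR|
          + |(Polynomial.derivative pm).eval ξ - dL|) := by
      calc |dR - dL| ≤ |(Polynomial.derivative (pp - pm)).eval ξ|
            + |((Polynomial.derivative pp).eval ξ - dR)
              - ((Polynomial.derivative pm).eval ξ - dL)| := by
            rw [heq]; exact abs_sub _ _
        _ ≤ _ := by
            have := abs_sub ((Polynomial.derivative pp).eval ξ - dR)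
              ((Polynomial.derivative pm).eval ξ - dL)
            linarith
    linarith
  -- final step: mean value theorem
  rcases eq_or_ne y μ with hyμ | hyμ
  · rw [hyμ, sub_self, abs_zero]
    apply div_nonneg _ (abs_nonneg _)
    apply mul_nonneg _ hMm0
    positivity
  · have hkey : |dR - dL| / 2 * |μ - y| ≤ |(pp - pm).eval μ| := by
      have hGy : (pp - pm).eval y = 0 := by
        rw [Polynomial.eval_sub, hzero, sub_self]
      rcases lt_or_gt_of_ne hyμ with hlt | hgt
      · -- y < μ
        obtain ⟨ξ, hξmem, hξeq⟩ := exists_hasDerivAt_eq_slope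
          (fun t => (pp - pm).eval t) (fun t => (Polynomial.derivative (pp - pm)).eval t) hlt
          ((pp - pm).continuous_aeval.continuousOn)
          (fun t _ => Polynomial.hasDerivAt _ t)
        have hξ1 : X ja ≤ ξ := le_trans hy.1 hξmem.1.le
        have hξ2 : ξ ≤ X jb := le_trans hξmem.2.le hμb
        have hne : μ - y ≠ 0 := by intro h; apply hyμ; linarith [sub_eq_zero.1 h]
        have : (Polynomial.derivative (pp - pm)).eval ξ * (μ - y) = (pp - pm).eval μ := by
          rw [hξeq, hGy, sub_zero, div_mul_cancel₀ _ hne]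
        calc |dR - dL| / 2 * |μ - y|
            ≤ |(Polynomial.derivative (pp - pm)).eval ξ| * |μ - y| :=
              mul_le_mul_of_nonneg_right (hGd ξ hξ1 hξ2) (abs_nonneg _)
          _ = |(Polynomial.derivative (pp - pm)).eval ξ * (μ - y)| := (abs_mul _ _).symm
          _ = |(pp - pm).eval μ| := by rw [this]
      · -- μ < y
        obtain ⟨ξ, hξmem, hξeq⟩ := exists_hasDerivAt_eq_slope
          (fun t => (pp - pm).eval t) (fun t => (Polynomial.derivative (pp - pm)).eval t) hgt
          ((pp - pm).continuous_aeval.continuousOn)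
          (fun t _ => Polynomial.hasDerivAt _ t)
        have hξ1 : X ja ≤ ξ := le_trans haμ hξmem.1.le
        have hξ2 : ξ ≤ X jb := le_trans hξmem.2.le hy.2
        have hne : y - μ ≠ 0 := by intro h; apply hyμ; linarith [sub_eq_zero.1 h]
        have : (Polynomial.derivative (pp - pm)).eval ξ * (y - μ) = -(pp - pm).eval μ := by
          rw [hξeq, hGy, zero_sub, div_mul_cancel₀ _ hne]
        calc |dR - dL| / 2 * |μ - y|
            ≤ |(Polynomial.derivative (pp - pm)).eval ξ| * |μ - y| :=
              mul_le_mul_of_nonneg_right (hGd ξ hξ1 hξ2) (abs_nonneg _)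
          _ = |(Polynomial.derivative (pp - pm)).eval ξ * (y - μ)| := by
              rw [abs_mul, abs_sub_comm μ y]
          _ = |(pp - pm).eval μ| := by rw [this, abs_neg]
    -- conclude
    rw [le_div_iff₀ hJpos]
    have hRm : (((m : ℝ) + 1) * hmax) ^ m = ((m : ℝ) + 1) ^ m * hmax ^ m := mul_pow _ _ m
    calc |μ - y| * |dR - dL| = 2 * (|dR - dL| / 2 * |μ - y|) := by ring
      _ ≤ 2 * (2 * (Λ + 1) * (M m * (((m : ℝ) + 1) * hmax) ^ m)) := by
          have := le_trans hkey hGμ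
          linarith
      _ = 4 * (Λ + 1) * ((m : ℝ) + 1) ^ m * hmax ^ m * M m := by rw [hRm]; ring
end

section
/- Let f: ℝ → ℝ be continuous on ℝ, C² on ℝ∖{μ} with M₂ := sup_{ℝ∖{μ}} |f''| < ∞ and jump [f'] := f'(μ⁺) − f'(μ⁻) > 0. Let f⁻ be any C² function on ℝ with f⁻ = f on (−∞, μ] and |（f⁻)''| ≤ M₂ on ℝ, and let f⁺ be any C² function on ℝ with f⁺ = f on [μ, ∞) and |(f⁺)''| ≤ M₂ on ℝ. Then for every x ≤ μ, f⁺(x) − f⁻(x) ≤ −(μ−x)[f'] + (μ−x)² M₂, and for every x ≥ μ, f⁺(x) − f⁻(x) ≥ (x−μ)[f'] − (x−μ)² M₂. -/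
/-- Taylor-type bounds for the smooth one-sided `C²` extensions `f⁻` and `f⁺` of `f`
across the corner `μ`: for `x ≤ μ`, `f⁺(x) − f⁻(x) ≤ −(μ−x)[f'] + (μ−x)² M₂`, and for
`x ≥ μ`, `f⁺(x) − f⁻(x) ≥ (x−μ)[f'] − (x−μ)² M₂`. -/
theorem statement19 (f f' f'' : ℝ → ℝ) (μ : ℝ)
    (hf : Continuous f)
    (hd1 : ∀ x ≠ μ, HasDerivAt f (f' x) x)
    (hd2 : ∀ x ≠ μ, HasDerivAt f' (f'' x) x)
    (hc2 : ContinuousOn f'' {μ}ᶜ)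
    (M₂ : ℝ) (hM : ∀ x ≠ μ, |f'' x| ≤ M₂)
    (dL dR : ℝ)
    (hdL : HasDerivWithinAt f dL (Set.Iic μ) μ)
    (hdR : HasDerivWithinAt f dR (Set.Ici μ) μ)
    (hjump : 0 < dR - dL)
    (fm fm' fm'' fp fp' fp'' : ℝ → ℝ)
    (hfm1 : ∀ x : ℝ, HasDerivAt fm (fm' x) x)
    (hfm2 : ∀ x : ℝ, HasDerivAt fm' (fm'' x) x)
    (hfmc : Continuous fm'')
    (hfmeq : ∀ x ≤ μ, fm x = f x)
    (hfmb : ∀ x : ℝ, |fm'' x| ≤ M₂)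
    (hfp1 : ∀ x : ℝ, HasDerivAt fp (fp' x) x)
    (hfp2 : ∀ x : ℝ, HasDerivAt fp' (fp'' x) x)
    (hfpc : Continuous fp'')
    (hfpeq : ∀ x : ℝ, μ ≤ x → fp x = f x)
    (hfpb : ∀ x : ℝ, |fp'' x| ≤ M₂) :
    (∀ x ≤ μ, fp x - fm x ≤ -(μ - x) * (dR - dL) + (μ - x) ^ 2 * M₂) ∧
    (∀ x : ℝ, μ ≤ x → (x - μ) * (dR - dL) - (x - μ) ^ 2 * M₂ ≤ fp x - fm x) := by
  -- derivatives at μ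
  have hfmL : fm' μ = dL := by
    have h1 : HasDerivWithinAt fm dL (Set.Iic μ) μ :=
      hdL.congr (fun y hy => hfmeq y hy) (hfmeq μ le_rfl)
    exact (uniqueDiffOn_Iic μ μ (Set.mem_Iic.2 le_rfl)).eq_deriv _ (hfm1 μ).hasDerivWithinAt h1
  have hfpR : fp' μ = dR := by
    have h1 : HasDerivWithinAt fp dR (Set.Ici μ) μ :=
      hdR.congr (fun y hy => hfpeq y hy) (hfpeq μ le_rfl)
    exact (uniqueDiffOn_Ici μ μ (Set.mem_Ici.2 le_rfl)).eq_deriv _ (hfp1 μ).hasDerivWithinAt h1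
  set g : ℝ → ℝ := fun x => fp x - fm x with hg_def
  set g' : ℝ → ℝ := fun x => fp' x - fm' x with hg'_def
  have hg1 : ∀ x, HasDerivAt g (g' x) x := fun x => (hfp1 x).sub (hfm1 x)
  have hg2 : ∀ x, HasDerivAt g' (fp'' x - fm'' x) x := fun x => (hfp2 x).sub (hfm2 x)
  have hgμ : g μ = 0 := by
    simp only [hg_def, hfpeq μ le_rfl, hfmeq μ le_rfl, sub_self]
  have hg'μ : g' μ = dR - dL := by simp only [hg'_def, hfpR, hfmL]
  -- Lipschitz bound on g'
  have hlip : ∀ t : ℝ, |g' t - g' μ| ≤ 2 * M₂ * |t - μ| := by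
    intro t
    have hb : ∀ x ∈ (Set.univ : Set ℝ), ‖fp'' x - fm'' x‖ ≤ 2 * M₂ := by
      intro x _
      calc ‖fp'' x - fm'' x‖ ≤ ‖fp'' x‖ + ‖fm'' x‖ := norm_sub_le _ _
        _ ≤ 2 * M₂ := by
            have := hfpb x; have := hfmb x
            simp only [Real.norm_eq_abs] at *; linarith
    have := convex_univ.norm_image_sub_le_of_norm_hasDerivWithin_le
      (fun x _ => (hg2 x).hasDerivWithinAt) hb (Set.mem_univ μ) (Set.mem_univ t)
    simpa [Real.norm_eq_abs] using this
  -- auxiliary functions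
  set u : ℝ → ℝ := fun t => g t - (dR - dL) * (t - μ) with hu_def
  have hu1 : ∀ t, HasDerivAt u (g' t - (dR - dL)) t := by
    intro t
    have h2 : HasDerivAt (fun t : ℝ => (dR - dL) * (t - μ)) (dR - dL) t := by
      simpa using (((hasDerivAt_id t).sub_const μ).const_mul (dR - dL))
    exact (hg1 t).sub h2
  have huμ : u μ = 0 := by simp [hu_def, hgμ]
  have hu'bound : ∀ t : ℝ, |g' t - (dR - dL)| ≤ 2 * M₂ * |t - μ| := by
    intro t
    have := hlip t
    rwa [hg'μ] at this
  constructor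
  · -- x ≤ μ : show w = M₂(t-μ)² - u antitone on Iic μ
    intro x hx
    set w : ℝ → ℝ := fun t => M₂ * (t - μ) ^ 2 - u t with hw_def
    have hw1 : ∀ t, HasDerivAt w (M₂ * (2 * (t - μ)) - (g' t - (dR - dL))) t := by
      intro t
      have h2 : HasDerivAt (fun t : ℝ => M₂ * (t - μ) ^ 2) (M₂ * (2 * (t - μ))) t := by
        have : HasDerivAt (fun t : ℝ => (t - μ) ^ 2) (2 * (t - μ)) t := by
          simpa using (((hasDerivAt_id t).sub_const μ).fun_pow 2)
        exact this.const_mul M₂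
      exact h2.sub (hu1 t)
    have hanti : AntitoneOn w (Set.Iic μ) := by
      apply antitoneOn_of_deriv_nonpos (convex_Iic μ)
        (fun t _ => (hw1 t).continuousAt.continuousWithinAt)
        (fun t _ => ((hw1 t).differentiableAt).differentiableWithinAt)
      intro t ht
      rw [interior_Iic] at ht
      rw [(hw1 t).deriv]
      have hb := hu'bound t
      have habs : |t - μ| = μ - t := by
        rw [abs_of_nonpos (by linarith [ht.out] : t - μ ≤ 0)]; ring
      rw [habs] at hb
      have := abs_le.1 hb
      nlinarith [this.1, this.2]
    have := hanti hx (Set.mem_Iic.2 le_rfl) hx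
    have hwμ : w μ = 0 := by simp [hw_def, huμ]
    rw [hwμ] at this
    have : u x ≤ M₂ * (x - μ) ^ 2 := by
      have hwx : M₂ * (x - μ) ^ 2 - u x ≥ 0 := this
      linarith
    simp only [hu_def, hg_def] at this
    nlinarith [this]
  · -- x ≥ μ : w = M₂(t-μ)² + u monotone on Ici μ
    intro x hx
    set w : ℝ → ℝ := fun t => M₂ * (t - μ) ^ 2 + u t with hw_def
    have hw1 : ∀ t, HasDerivAt w (M₂ * (2 * (t - μ)) + (g' t - (dR - dL))) t := by
      intro t
      have h2 : HasDerivAt (fun t : ℝ => M₂ * (t - μ) ^ 2) (M₂ * (2 * (t - μ))) t := by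
        have : HasDerivAt (fun t : ℝ => (t - μ) ^ 2) (2 * (t - μ)) t := by
          simpa using (((hasDerivAt_id t).sub_const μ).fun_pow 2)
        exact this.const_mul M₂
      exact h2.add (hu1 t)
    have hmono : MonotoneOn w (Set.Ici μ) := by
      apply monotoneOn_of_deriv_nonneg (convex_Ici μ)
        (fun t _ => (hw1 t).continuousAt.continuousWithinAt)
        (fun t _ => ((hw1 t).differentiableAt).differentiableWithinAt)
      intro t ht
      rw [interior_Ici] at ht
      rw [(hw1 t).deriv]
      have hb := hu'bound t
      have habs : |t - μ| = t - μ := abs_of_nonneg (by linarith [ht.out])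
      rw [habs] at hb
      have := abs_le.1 hb
      nlinarith [this.1, this.2]
    have := hmono (Set.mem_Ici.2 le_rfl) hx hx
    have hwμ : w μ = 0 := by simp [hw_def, huμ]
    rw [hwμ] at this
    have : -(M₂ * (x - μ) ^ 2) ≤ u x := by
      have hwx : 0 ≤ M₂ * (x - μ) ^ 2 + u x := this
      linarith
    simp only [hu_def, hg_def] at this
    nlinarith [this]
end
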